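/- arXiv:1312.6098 — 3 statements merged into one kernel-verified Lean document; each statement's English description precedes it below -/
import Mathlib

section
/- The number of regions of an arrangement of m hyperplanes in general position in R^{n_0} equals the sum over s from 0 to n_0 of binomial(m, s). -/
open Set Matrix

/-- The set of regions (connected components of `S`) for `S` the complement of a
hyperplane arrangement. -/
noncomputable def regionsOf {E : Type*} [TopologicalSpace E] (S : Set E) : Set (Set E) :=
  (fun x => connectedComponentIn S x) '' S

/-- Solution set of the subsystem of hyperplane equations indexed by `s`. -/
def solSet {m n : ℕ} (w : Fin m → Fin n → ℝ) (b : Fin m → ℝ) (s : Finset (Fin m)) :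
    Set (Fin n → ℝ) :=
  {x | ∀ i ∈ s, ∑ j, w i j * x j = b i}

/-- An arrangement of `m` hyperplanes `{x | ⟨w i, x⟩ = b i}` in `ℝ^n` is in general
position if every `p ≤ n` of them intersect in an affine subspace of dimension `n - p`,
and every `p > n` of them have empty intersection. -/
def InGeneralPosition {m n : ℕ} (w : Fin m → Fin n → ℝ) (b : Fin m → ℝ) : Prop :=
  (∀ i, w i ≠ 0) ∧
  (∀ s : Finset (Fin m), s.card ≤ n →
    ∃ x₀ ∈ solSet w b s, ∃ V : Submodule ℝ (Fin n → ℝ),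
      Module.finrank ℝ V = n - s.card ∧ solSet w b s = {x | x - x₀ ∈ V}) ∧
  (∀ s : Finset (Fin m), n < s.card → solSet w b s = ∅)

namespace Arr

variable {m n : ℕ}

/-- the open cell with sign vector ε -/
def cell (w : Fin m → Fin n → ℝ) (b : Fin m → ℝ) (ε : Fin m → Bool) : Set (Fin n → ℝ) :=
  {x | ∀ i, if ε i then b i < w i ⬝ᵥ x else w i ⬝ᵥ x < b i}

noncomputable def signVec (w : Fin m → Fin n → ℝ) (b : Fin m → ℝ) (x : Fin n → ℝ) : Fin m → Bool :=
  fun i => decide (b i < w i ⬝ᵥ x)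

lemma continuous_dot (v : Fin n → ℝ) : Continuous fun x : Fin n → ℝ => v ⬝ᵥ x := by
  apply continuous_finset_sum; intro j _; exact (continuous_const.mul (continuous_apply j))

lemma isOpen_cell (w : Fin m → Fin n → ℝ) (b : Fin m → ℝ) (ε : Fin m → Bool) :
    IsOpen (cell w b ε) := by
  have : cell w b ε = ⋂ i, {x | if ε i then b i < w i ⬝ᵥ x else w i ⬝ᵥ x < b i} := by
    ext x; simp [cell, Set.mem_iInter]
  rw [this]
  apply isOpen_iInter_of_finite
  intro i
  by_cases h : ε i <;> simp only [h, if_true, if_false]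
  · exact isOpen_lt continuous_const (continuous_dot _)
  · exact isOpen_lt (continuous_dot _) continuous_const

lemma convex_cell (w : Fin m → Fin n → ℝ) (b : Fin m → ℝ) (ε : Fin m → Bool) :
    Convex ℝ (cell w b ε) := by
  have : cell w b ε = ⋂ i, {x | if ε i then b i < w i ⬝ᵥ x else w i ⬝ᵥ x < b i} := by
    ext x; simp [cell, Set.mem_iInter]
  rw [this]
  apply convex_iInter
  intro i
  have hlin : IsLinearMap ℝ (fun x : Fin n → ℝ => w i ⬝ᵥ x) :=
    ⟨fun x y => dotProduct_add _ _ _, fun c x => by simp [dotProduct_smul]⟩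
  by_cases h : ε i <;> simp only [h, if_true, if_false]
  · exact convex_halfSpace_gt hlin (b i)
  · exact convex_halfSpace_lt hlin (b i)

lemma cell_subset (w : Fin m → Fin n → ℝ) (b : Fin m → ℝ) (ε : Fin m → Bool) :
    cell w b ε ⊆ {x | ∀ i, w i ⬝ᵥ x ≠ b i} := by
  intro x hx i
  have := hx i
  by_cases h : ε i <;> simp only [h, if_true, if_false] at this
  · exact fun he => absurd this (by rw [he]; exact lt_irrefl _)
  · exact ne_of_lt this

lemma mem_cell_signVec (w : Fin m → Fin n → ℝ) (b : Fin m → ℝ) {x : Fin n → ℝ}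
    (hx : ∀ i, w i ⬝ᵥ x ≠ b i) : x ∈ cell w b (signVec w b x) := by
  intro i
  by_cases h : b i < w i ⬝ᵥ x
  · simp [signVec, h]
  · have : w i ⬝ᵥ x < b i := lt_of_le_of_ne (not_lt.mp h) (hx i)
    simp [signVec, h, this]

lemma signVec_eq_of_mem_cell {w : Fin m → Fin n → ℝ} {b : Fin m → ℝ} {ε : Fin m → Bool}
    {x : Fin n → ℝ} (hx : x ∈ cell w b ε) : signVec w b x = ε := by
  funext i
  have := hx i
  by_cases h : ε i <;> simp only [h, if_true, if_false] at this
  · simp [signVec, h, this]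
  · simp [signVec, h, not_lt.mpr (le_of_lt this)]

lemma connectedComponentIn_eq_cell (w : Fin m → Fin n → ℝ) (b : Fin m → ℝ)
    {x : Fin n → ℝ} (hx : x ∈ {x | ∀ i, w i ⬝ᵥ x ≠ b i}) :
    connectedComponentIn {x | ∀ i, w i ⬝ᵥ x ≠ b i} x = cell w b (signVec w b x) := by
  set S := {x : Fin n → ℝ | ∀ i, w i ⬝ᵥ x ≠ b i}
  apply Set.Subset.antisymm
  · -- component ⊆ cell
    intro y hy
    have hconn : IsPreconnected (connectedComponentIn S x) := isPreconnected_connectedComponentIn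
    have hsub : connectedComponentIn S x ⊆ S := connectedComponentIn_subset _ _
    have hxmem : x ∈ connectedComponentIn S x := mem_connectedComponentIn hx
    intro i
    set A := {z : Fin n → ℝ | b i < w i ⬝ᵥ z}
    set B := {z : Fin n → ℝ | w i ⬝ᵥ z < b i}
    have hA : IsOpen A := isOpen_lt continuous_const (continuous_dot _)
    have hB : IsOpen B := isOpen_lt (continuous_dot _) continuous_const
    have hcov : connectedComponentIn S x ⊆ A ∪ B := by
      intro z hz
      rcases lt_or_gt_of_ne (hsub hz i) with h | h
      · exact Or.inr h
      · exact Or.inl h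
    have hdisj : Disjoint A B := by
      rw [Set.disjoint_left]
      intro z h1 h2
      have h1' : b i < w i ⬝ᵥ z := h1
      have h2' : w i ⬝ᵥ z < b i := h2
      exact absurd (lt_trans h1' h2') (lt_irrefl _)
    rcases hconn.subset_or_subset hA hB hdisj hcov with h | h
    · have hxa : b i < w i ⬝ᵥ x := h hxmem
      have hya : b i < w i ⬝ᵥ y := h hy
      simp [signVec, hxa, hya]
    · have hxa : ¬ (b i < w i ⬝ᵥ x) := not_lt.mpr (le_of_lt (h hxmem))
      have hya : w i ⬝ᵥ y < b i := h hy
      simp [signVec, hxa, hya]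
  · exact ((convex_cell w b _).isPreconnected).subset_connectedComponentIn
      (mem_cell_signVec w b hx) (cell_subset w b _)

end Arr

namespace Arr2
open Arr

variable {m n : ℕ}

lemma regionsOf_eq (w : Fin m → Fin n → ℝ) (b : Fin m → ℝ) :
    regionsOf {x : Fin n → ℝ | ∀ i, w i ⬝ᵥ x ≠ b i}
      = cell w b '' {ε | (cell w b ε).Nonempty} := by
  ext U
  constructor
  · rintro ⟨x, hx, rfl⟩
    exact ⟨signVec w b x, ⟨x, mem_cell_signVec w b hx⟩,
      (connectedComponentIn_eq_cell w b hx).symm⟩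
  · rintro ⟨ε, ⟨x, hx⟩, rfl⟩
    refine ⟨x, cell_subset w b ε hx, ?_⟩
    show connectedComponentIn _ x = _
    rw [connectedComponentIn_eq_cell w b (cell_subset w b ε hx), signVec_eq_of_mem_cell hx]

lemma ncard_regions (w : Fin m → Fin n → ℝ) (b : Fin m → ℝ) :
    (regionsOf {x : Fin n → ℝ | ∀ i, w i ⬝ᵥ x ≠ b i}).ncard
      = {ε | (cell w b ε).Nonempty}.ncard := by
  rw [regionsOf_eq]
  apply Set.ncard_image_of_injOn
  rintro ε₁ ⟨x₁, hx₁⟩ ε₂ ⟨x₂, hx₂⟩ he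
  rw [← signVec_eq_of_mem_cell hx₁, ← signVec_eq_of_mem_cell (he ▸ hx₁ : x₁ ∈ cell w b ε₂)]

end Arr2

lemma sum_choose_zero (n : ℕ) : ∑ s ∈ Finset.range (n + 1), Nat.choose 0 s = 1 := by
  induction n with
  | zero => simp
  | succ k ih => rw [Finset.sum_range_succ, ih, Nat.choose_eq_zero_of_lt (Nat.succ_pos k)]

lemma sum_choose_succ (m n : ℕ) :
    ∑ s ∈ Finset.range (n + 1), Nat.choose (m + 1) s
      = ∑ s ∈ Finset.range (n + 1), Nat.choose m s + ∑ s ∈ Finset.range n, Nat.choose m s := by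
  induction n with
  | zero => simp
  | succ k ih =>
    rw [Finset.sum_range_succ, ih, Finset.sum_range_succ (f := fun s => Nat.choose m s) (n := k+1),
      Finset.sum_range_succ (f := fun s => Nat.choose m s) (n := k), Nat.choose_succ_succ]
    ring

lemma perturb {n : ℕ} {U : Set (Fin n → ℝ)} (hU : IsOpen U) {x : Fin n → ℝ} (hx : x ∈ U)
    (v : Fin n → ℝ) : ∃ δ : ℝ, 0 < δ ∧ x + δ • v ∈ U ∧ x - δ • v ∈ U := by
  rcases Metric.isOpen_iff.mp hU x hx with ⟨r, hr, hball⟩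
  refine ⟨r / (2 * (‖v‖ + 1)), by positivity, ?_, ?_⟩
  · apply hball
    rw [Metric.mem_ball, dist_eq_norm, add_sub_cancel_left, norm_smul]
    rw [Real.norm_eq_abs, abs_of_pos (by positivity)]
    rw [div_mul_eq_mul_div, div_lt_iff₀ (by positivity)]
    nlinarith [norm_nonneg v, hr]
  · apply hball
    rw [Metric.mem_ball, dist_eq_norm, sub_sub_cancel_left, norm_neg, norm_smul]
    rw [Real.norm_eq_abs, abs_of_pos (by positivity)]
    rw [div_mul_eq_mul_div, div_lt_iff₀ (by positivity)]
    nlinarith [norm_nonneg v, hr]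

lemma dot_add_smul {n : ℕ} (u x v : Fin n → ℝ) (δ : ℝ) :
    u ⬝ᵥ (x + δ • v) = u ⬝ᵥ x + δ * (u ⬝ᵥ v) := by
  rw [dotProduct_add, dotProduct_smul, smul_eq_mul]

lemma dot_sub_smul {n : ℕ} (u x v : Fin n → ℝ) (δ : ℝ) :
    u ⬝ᵥ (x - δ • v) = u ⬝ᵥ x - δ * (u ⬝ᵥ v) := by
  rw [dotProduct_sub, dotProduct_smul, smul_eq_mul]

lemma dot_self_pos {n : ℕ} {v : Fin n → ℝ} (hv : v ≠ 0) : 0 < v ⬝ᵥ v := by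
  have h0 : v ⬝ᵥ v ≠ 0 := (dotProduct_self_eq_zero (v := v)).not.mpr hv
  exact lt_of_le_of_ne (Finset.sum_nonneg fun j _ => mul_self_nonneg _) (Ne.symm h0)

namespace Arr
variable {m n : ℕ}

lemma cell_snoc (w : Fin (m+1) → Fin n → ℝ) (b : Fin (m+1) → ℝ) (ε' : Fin m → Bool) (t : Bool) :
    cell w b (Fin.snoc ε' t)
      = cell (fun i => w i.castSucc) (fun i => b i.castSucc) ε'
        ∩ {x | if t then b (Fin.last m) < w (Fin.last m) ⬝ᵥ x
               else w (Fin.last m) ⬝ᵥ x < b (Fin.last m)} := by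
  ext x
  simp only [cell, Set.mem_inter_iff, Set.mem_setOf_eq]
  constructor
  · intro h
    refine ⟨fun i => ?_, ?_⟩
    · have := h i.castSucc; rwa [Fin.snoc_castSucc] at this
    · have := h (Fin.last m); rwa [Fin.snoc_last] at this
  · rintro ⟨h1, h2⟩ i
    refine Fin.lastCases ?_ ?_ i
    · rwa [Fin.snoc_last]
    · intro j; rw [Fin.snoc_castSucc]; exact h1 j

/-- a nonempty cell of the deleted arrangement has a nonempty extension. -/
lemma exists_extension (w : Fin (m+1) → Fin n → ℝ) (b : Fin (m+1) → ℝ)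
    (hw : w (Fin.last m) ≠ 0) (ε' : Fin m → Bool)
    (h : (cell (fun i => w i.castSucc) (fun i => b i.castSucc) ε').Nonempty) :
    (cell w b (Fin.snoc ε' true)).Nonempty ∨ (cell w b (Fin.snoc ε' false)).Nonempty := by
  set w' := fun i : Fin m => w i.castSucc
  set b' := fun i : Fin m => b i.castSucc
  set v := w (Fin.last m)
  obtain ⟨x, hx⟩ := h
  rcases lt_trichotomy (v ⬝ᵥ x) (b (Fin.last m)) with hlt | heq | hgt
  · refine Or.inr ⟨x, ?_⟩
    rw [cell_snoc]; exact ⟨hx, by simpa using hlt⟩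
  · obtain ⟨δ, hδ, hp, _⟩ := perturb (isOpen_cell w' b' ε') hx v
    refine Or.inl ⟨x + δ • v, ?_⟩
    rw [cell_snoc]
    refine ⟨hp, ?_⟩
    simp only [Set.mem_setOf_eq, if_true, dot_add_smul]
    rw [heq]
    have := dot_self_pos hw
    nlinarith
  · refine Or.inl ⟨x, ?_⟩
    rw [cell_snoc]; exact ⟨hx, by simpa using hgt⟩

/-- both extensions nonempty iff cell meets the last hyperplane. -/
lemma both_extensions_iff (w : Fin (m+1) → Fin n → ℝ) (b : Fin (m+1) → ℝ)
    (hw : w (Fin.last m) ≠ 0) (ε' : Fin m → Bool) :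
    ((cell w b (Fin.snoc ε' true)).Nonempty ∧ (cell w b (Fin.snoc ε' false)).Nonempty)
      ↔ (cell (fun i => w i.castSucc) (fun i => b i.castSucc) ε'
          ∩ {x | w (Fin.last m) ⬝ᵥ x = b (Fin.last m)}).Nonempty := by
  set w' := fun i : Fin m => w i.castSucc
  set b' := fun i : Fin m => b i.castSucc
  set v := w (Fin.last m)
  constructor
  · rintro ⟨⟨u, hu⟩, ⟨z, hz⟩⟩
    rw [cell_snoc] at hu hz
    obtain ⟨hu1, hu2⟩ := hu
    obtain ⟨hz1, hz2⟩ := hz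
    simp only [Set.mem_setOf_eq, if_true, if_false] at hu2 hz2
    -- IVT on segment from z to u
    set f : ℝ → ℝ := fun θ => v ⬝ᵥ (z + θ • (u - z))
    have hf : Continuous f := by
      apply Continuous.comp (continuous_dot v)
      exact continuous_const.add (continuous_id.smul continuous_const)
    have hf0 : f 0 = v ⬝ᵥ z := by simp [f]
    have hf1 : f 1 = v ⬝ᵥ u := by simp [f]
    obtain ⟨θ, hθmem, hθ⟩ := intermediate_value_Icc zero_le_one
      hf.continuousOn (show b (Fin.last m) ∈ Set.Icc (f 0) (f 1) by
        rw [hf0, hf1]; exact ⟨le_of_lt hz2, le_of_lt hu2⟩)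
    refine ⟨z + θ • (u - z), ?_, hθ⟩
    have : z + θ • (u - z) = (1 - θ) • z + θ • u := by
      rw [smul_sub]; module
    rw [this]
    exact convex_cell w' b' ε' hz1 hu1 (by linarith [hθmem.2]) hθmem.1 (by ring)
  · rintro ⟨x, hx1, hx2⟩
    obtain ⟨δ, hδ, hp, hm⟩ := perturb (isOpen_cell w' b' ε') hx1 v
    have hvv := dot_self_pos hw
    have hx2' : w (Fin.last m) ⬝ᵥ x = b (Fin.last m) := hx2
    constructor
    · refine ⟨x + δ • v, ?_⟩
      rw [cell_snoc]
      refine ⟨hp, show b (Fin.last m) < w (Fin.last m) ⬝ᵥ (x + δ • v) from ?_⟩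
      rw [dot_add_smul, hx2']; nlinarith
    · refine ⟨x - δ • v, ?_⟩
      rw [cell_snoc]
      refine ⟨hm, show w (Fin.last m) ⬝ᵥ (x - δ • v) < b (Fin.last m) from ?_⟩
      rw [dot_sub_smul, hx2']; nlinarith

end Arr

lemma mem_solSet_iff {m n : ℕ} (w : Fin m → Fin n → ℝ) (b : Fin m → ℝ) (s : Finset (Fin m))
    (x : Fin n → ℝ) : x ∈ solSet w b s ↔ ∀ i ∈ s, w i ⬝ᵥ x = b i := Iff.rfl

namespace Arr
variable {m n : ℕ}

lemma ncard_split (w : Fin (m+1) → Fin n → ℝ) (b : Fin (m+1) → ℝ)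
    (hw : w (Fin.last m) ≠ 0) :
    {ε | (cell w b ε).Nonempty}.ncard
      = {ε' | (cell (fun i => w i.castSucc) (fun i => b i.castSucc) ε').Nonempty}.ncard
        + {ε' | (cell (fun i => w i.castSucc) (fun i => b i.castSucc) ε'
            ∩ {x | w (Fin.last m) ⬝ᵥ x = b (Fin.last m)}).Nonempty}.ncard := by
  classical
  set w' := fun i : Fin m => w i.castSucc
  set b' := fun i : Fin m => b i.castSucc
  set Bp := {ε' : Fin m → Bool | (cell w b (Fin.snoc ε' true)).Nonempty}
  set Bm := {ε' : Fin m → Bool | (cell w b (Fin.snoc ε' false)).Nonempty}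
  have hsplit : {ε | (cell w b ε).Nonempty}
      = (fun ε' => Fin.snoc ε' true) '' Bp ∪ (fun ε' => Fin.snoc ε' false) '' Bm := by
    ext ε
    constructor
    · intro hε
      have : ε = Fin.snoc (Fin.init ε) (ε (Fin.last m)) := (Fin.snoc_init_self ε).symm
      cases ht : ε (Fin.last m)
      · refine Or.inr ⟨Fin.init ε, ?_, ?_⟩
        · show (cell w b (Fin.snoc (Fin.init ε) false)).Nonempty
          rw [← ht, ← this]; exact hε
        · show Fin.snoc (Fin.init ε) false = ε
          rw [← ht]; exact Fin.snoc_init_self ε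
      · refine Or.inl ⟨Fin.init ε, ?_, ?_⟩
        · show (cell w b (Fin.snoc (Fin.init ε) true)).Nonempty
          rw [← ht, ← this]; exact hε
        · show Fin.snoc (Fin.init ε) true = ε
          rw [← ht]; exact Fin.snoc_init_self ε
    · rintro (⟨ε', hε', rfl⟩ | ⟨ε', hε', rfl⟩) <;> exact hε'
  have hinj : ∀ t : Bool, Function.Injective (fun ε' : Fin m → Bool => (Fin.snoc ε' t : Fin (m+1) → Bool)) := by
    intro t ε₁ ε₂ h
    funext i
    have h2 : (Fin.snoc ε₁ t : Fin (m+1) → Bool) i.castSucc = (Fin.snoc ε₂ t : Fin (m+1) → Bool) i.castSucc := congrFun h i.castSucc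
    rwa [Fin.snoc_castSucc, Fin.snoc_castSucc] at h2
  have hdisj : Disjoint ((fun ε' : Fin m → Bool => (Fin.snoc ε' true : Fin (m+1) → Bool)) '' Bp)
      ((fun ε' : Fin m → Bool => (Fin.snoc ε' false : Fin (m+1) → Bool)) '' Bm) := by
    rw [Set.disjoint_left]
    rintro ε ⟨ε₁, -, rfl⟩ ⟨ε₂, -, h⟩
    have h2 : (Fin.snoc ε₂ false : Fin (m+1) → Bool) (Fin.last m) = (Fin.snoc ε₁ true : Fin (m+1) → Bool) (Fin.last m) := congrFun h (Fin.last m)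
    rw [Fin.snoc_last, Fin.snoc_last] at h2
    exact Bool.noConfusion h2
  have hBcup : Bp ∪ Bm = {ε' | (cell w' b' ε').Nonempty} := by
    ext ε'
    constructor
    · rintro (h | h) <;>
      · obtain ⟨x, hx⟩ := h
        rw [cell_snoc] at hx
        exact ⟨x, hx.1⟩
    · intro h
      rcases exists_extension w b hw ε' h with h | h
      · exact Or.inl h
      · exact Or.inr h
  have hBcap : Bp ∩ Bm = {ε' | (cell w' b' ε'
      ∩ {x | w (Fin.last m) ⬝ᵥ x = b (Fin.last m)}).Nonempty} := by
    ext ε'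
    simp only [Set.mem_inter_iff, Set.mem_setOf_eq]
    exact both_extensions_iff w b hw ε'
  rw [hsplit, Set.ncard_union_eq hdisj (Set.toFinite _) (Set.toFinite _),
    Set.ncard_image_of_injective _ (hinj true), Set.ncard_image_of_injective _ (hinj false),
    ← hBcup, ← hBcap]
  rw [Set.ncard_union_add_ncard_inter Bp Bm (Set.toFinite _) (Set.toFinite _)]

end Arr

namespace Arr
section Del
variable {m n : ℕ}

lemma solSet_del (w : Fin (m+1) → Fin n → ℝ) (b : Fin (m+1) → ℝ) (s : Finset (Fin m)) :
    solSet (fun i => w i.castSucc) (fun i => b i.castSucc) s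
      = solSet w b (s.map Fin.castSuccEmb) := by
  ext x
  simp only [solSet, Set.mem_setOf_eq, Finset.mem_map]
  constructor
  · rintro h j ⟨i, hi, rfl⟩
    exact h i hi
  · intro h i hi
    exact h i.castSucc ⟨i, hi, rfl⟩

lemma GP_del {w : Fin (m+1) → Fin n → ℝ} {b : Fin (m+1) → ℝ}
    (hgp : InGeneralPosition w b) :
    InGeneralPosition (fun i => w i.castSucc) (fun i => b i.castSucc) := by
  obtain ⟨h1, h2, h3⟩ := hgp
  refine ⟨fun i => h1 i.castSucc, fun s hs => ?_, fun s hs => ?_⟩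
  · obtain ⟨x₀, hx₀, V, hV, hsol⟩ := h2 (s.map Fin.castSuccEmb) (by rwa [Finset.card_map])
    rw [Finset.card_map] at hV
    exact ⟨x₀, by rwa [solSet_del], V, hV, by rwa [solSet_del]⟩
  · rw [solSet_del]
    exact h3 _ (by rwa [Finset.card_map])

lemma hyperplane_eq_solSet (w : Fin (m+1) → Fin n → ℝ) (b : Fin (m+1) → ℝ) :
    {x | w (Fin.last m) ⬝ᵥ x = b (Fin.last m)} = solSet w b {Fin.last m} := by
  ext x
  simp only [Set.mem_setOf_eq, solSet, Finset.mem_singleton]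
  constructor
  · rintro h i rfl; exact h
  · intro h; exact h _ rfl

/-- the n = 1 trace count: the last hyperplane is a point avoiding all others, so exactly
one sign vector of the deleted arrangement meets it. -/
lemma trace_count_dim_one (w : Fin (m+1) → Fin 1 → ℝ) (b : Fin (m+1) → ℝ)
    (hgp : InGeneralPosition w b) :
    {ε' | (cell (fun i => w i.castSucc) (fun i => b i.castSucc) ε'
        ∩ {x | w (Fin.last m) ⬝ᵥ x = b (Fin.last m)}).Nonempty}.ncard = 1 := by
  obtain ⟨h1, h2, h3⟩ := hgp
  obtain ⟨x₀, hx₀, V, hV, hsol⟩ := h2 {Fin.last m} (by simp)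
  have hVbot : V = ⊥ := by
    have : Module.finrank ℝ V = 0 := by simpa using hV
    exact Submodule.finrank_eq_zero.mp this
  have hH : {x | w (Fin.last m) ⬝ᵥ x = b (Fin.last m)} = {x₀} := by
    rw [hyperplane_eq_solSet, hsol, hVbot]
    ext x
    simp [sub_eq_zero]
  -- x₀ avoids all other hyperplanes
  have havoid : ∀ i : Fin m, w i.castSucc ⬝ᵥ x₀ ≠ b i.castSucc := by
    intro i hi
    have hcard : ({i.castSucc, Fin.last m} : Finset (Fin (m+1))).card = 2 := by
      rw [Finset.card_insert_of_notMem (by simp [Fin.ne_last_of_lt i.castSucc_lt_last]),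
        Finset.card_singleton]
    have := h3 {i.castSucc, Fin.last m} (by rw [hcard]; norm_num)
    have hx₀mem : x₀ ∈ solSet w b {i.castSucc, Fin.last m} := by
      intro j hj
      rcases Finset.mem_insert.mp hj with rfl | hj
      · exact hi
      · rw [Finset.mem_singleton] at hj
        subst hj
        exact hx₀ _ (Finset.mem_singleton_self _)
    rw [this] at hx₀mem
    exact hx₀mem
  have : {ε' | (cell (fun i => w i.castSucc) (fun i => b i.castSucc) ε'
      ∩ {x | w (Fin.last m) ⬝ᵥ x = b (Fin.last m)}).Nonempty}
      = {signVec (fun i => w i.castSucc) (fun i => b i.castSucc) x₀} := by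
    rw [hH]
    ext ε'
    simp only [Set.mem_setOf_eq, Set.mem_singleton_iff]
    constructor
    · rintro ⟨x, hx1, hx2⟩
      rw [Set.mem_singleton_iff] at hx2
      subst hx2
      exact (signVec_eq_of_mem_cell hx1).symm
    · rintro rfl
      exact ⟨x₀, mem_cell_signVec _ _ havoid, rfl⟩
  rw [this, Set.ncard_singleton]

end Del
end Arr

namespace Arr
section Trace

lemma solSet_anti {m n : ℕ} (w : Fin m → Fin n → ℝ) (b : Fin m → ℝ)
    {s t : Finset (Fin m)} (hst : s ⊆ t) : solSet w b t ⊆ solSet w b s :=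
  fun _ hx i hi => hx i (hst hi)

variable {m n : ℕ} (w : Fin (m+1) → Fin (n+2) → ℝ) (b : Fin (m+1) → ℝ)

set_option synthInstance.maxHeartbeats 1000000 in
set_option maxHeartbeats 1000000 in
lemma trace_arrangement (hgp : InGeneralPosition w b) :
    ∃ (w'' : Fin m → Fin (n+1) → ℝ) (b'' : Fin m → ℝ),
      InGeneralPosition w'' b'' ∧
      {ε' | (cell (fun i => w i.castSucc) (fun i => b i.castSucc) ε'
          ∩ {x | w (Fin.last m) ⬝ᵥ x = b (Fin.last m)}).Nonempty}
        = {ε' | (cell w'' b'' ε').Nonempty} := by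
  classical
  obtain ⟨h1, h2, h3⟩ := hgp
  obtain ⟨x₀, hx₀, V, hV, hsol⟩ := h2 {Fin.last m} (by simp)
  have hV' : Module.finrank ℝ V = n + 1 := by rw [hV]; simp
  set H := {x | w (Fin.last m) ⬝ᵥ x = b (Fin.last m)} with hHdef
  have hH : H = {x | x - x₀ ∈ V} := by rw [hHdef, hyperplane_eq_solSet, hsol]
  -- the parametrization of H
  set basis := Module.finBasisOfFinrankEq ℝ V hV' with hbasis
  set φ : (Fin (n+1) → ℝ) ≃ₗ[ℝ] V := basis.equivFun.symm with hφ
  set ψ : (Fin (n+1) → ℝ) →ₗ[ℝ] (Fin (n+2) → ℝ) := V.subtype ∘ₗ φ.toLinearMap with hψ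
  have hψ_mem : ∀ y, ψ y ∈ V := fun y => (φ y).2
  have hψ_inj : Function.Injective ψ := fun y₁ y₂ h =>
    φ.injective (Subtype.ext (by exact h))
  have hψ_surjV : ∀ v ∈ V, ∃ y, ψ y = v := fun v hv =>
    ⟨φ.symm ⟨v, hv⟩, by simp [hψ]⟩
  set A := LinearMap.toMatrix' ψ with hAdef
  have hA : ∀ y, ψ y = A.mulVec y := by
    intro y; rw [hAdef, ← Matrix.toLin'_apply, Matrix.toLin'_toMatrix']
  have hkey : ∀ (u : Fin (n+2) → ℝ) (y : Fin (n+1) → ℝ),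
      u ⬝ᵥ (x₀ + ψ y) = u ⬝ᵥ x₀ + (Matrix.vecMul u A) ⬝ᵥ y := by
    intro u y
    rw [dotProduct_add, hA, dotProduct_mulVec]
  set w'' : Fin m → Fin (n+1) → ℝ := fun i => Matrix.vecMul (w i.castSucc) A with hw''
  set b'' : Fin m → ℝ := fun i => b i.castSucc - w i.castSucc ⬝ᵥ x₀ with hb''
  have hmemH : ∀ y, x₀ + ψ y ∈ H := by
    intro y; rw [hH]; simpa using hψ_mem y
  have hsurjH : ∀ x ∈ H, ∃ y, x = x₀ + ψ y := by
    intro x hx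
    rw [hH] at hx
    obtain ⟨y, hy⟩ := hψ_surjV _ hx
    exact ⟨y, by rw [hy]; ring⟩
  -- membership in the big solution sets
  have hS₀mem : ∀ (s : Finset (Fin m)) (x : Fin (n+2) → ℝ),
      x ∈ solSet w b (insert (Fin.last m) (s.map Fin.castSuccEmb))
        ↔ (w (Fin.last m) ⬝ᵥ x = b (Fin.last m) ∧
            ∀ i ∈ s, w i.castSucc ⬝ᵥ x = b i.castSucc) := by
    intro s x
    constructor
    · intro h
      refine ⟨h _ (Finset.mem_insert_self _ _), fun i hi => ?_⟩
      exact h i.castSucc (Finset.mem_insert_of_mem (Finset.mem_map_of_mem _ hi))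
    · rintro ⟨hl, hs⟩ j hj
      rcases Finset.mem_insert.mp hj with rfl | hj
      · exact hl
      · obtain ⟨i, hi, rfl⟩ := Finset.mem_map.mp hj
        exact hs i hi
  have hcardS₀ : ∀ s : Finset (Fin m),
      (insert (Fin.last m) (s.map Fin.castSuccEmb)).card = s.card + 1 := by
    intro s
    rw [Finset.card_insert_of_notMem, Finset.card_map]
    intro h
    obtain ⟨i, -, hi⟩ := Finset.mem_map.mp h
    exact absurd hi (Fin.ne_last_of_lt i.castSucc_lt_last)
  have hsolSet'' : ∀ (s : Finset (Fin m)) (y : Fin (n+1) → ℝ),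
      y ∈ solSet w'' b'' s
        ↔ x₀ + ψ y ∈ solSet w b (insert (Fin.last m) (s.map Fin.castSuccEmb)) := by
    intro s y
    rw [hS₀mem]
    constructor
    · intro h
      refine ⟨hmemH y, fun i hi => ?_⟩
      have hww : (Matrix.vecMul (w i.castSucc) A) ⬝ᵥ y = b i.castSucc - w i.castSucc ⬝ᵥ x₀ :=
        h i hi
      rw [hkey, hww]
      ring
    · rintro ⟨-, hsy⟩ i hi
      show (Matrix.vecMul (w i.castSucc) A) ⬝ᵥ y = b i.castSucc - w i.castSucc ⬝ᵥ x₀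
      have h5 := hsy i hi
      rw [hkey] at h5
      linarith
  refine ⟨w'', b'', ⟨?_, ?_, ?_⟩, ?_⟩
  · -- w'' i ≠ 0
    intro i hi0
    have hconst : ∀ y, w i.castSucc ⬝ᵥ (x₀ + ψ y) = w i.castSucc ⬝ᵥ x₀ := by
      intro y
      rw [hkey]
      have : Matrix.vecMul (w i.castSucc) A = w'' i := rfl
      rw [this, hi0, zero_dotProduct, add_zero]
    set s₂ : Finset (Fin (m+1)) := {i.castSucc, Fin.last m} with hs₂
    have hcard₂ : s₂.card = 2 := by
      rw [hs₂, Finset.card_insert_of_notMem (by simp [Fin.ne_last_of_lt i.castSucc_lt_last]),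
        Finset.card_singleton]
    obtain ⟨x₁, hx₁, V₂, hV₂, hsol₂⟩ := h2 s₂ (by omega)
    have hx₁H : x₁ ∈ H := by
      rw [hHdef, hyperplane_eq_solSet]
      exact solSet_anti w b (by simp [hs₂]) hx₁
    obtain ⟨y₁, rfl⟩ := hsurjH x₁ hx₁H
    have hbval : w i.castSucc ⬝ᵥ x₀ = b i.castSucc := by
      rw [← hconst y₁]
      exact hx₁ i.castSucc (by simp [hs₂])
    have hsolH : solSet w b s₂ = H := by
      apply Set.Subset.antisymm
      · rw [hHdef, hyperplane_eq_solSet]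
        exact solSet_anti w b (by simp [hs₂]) 
      · intro x hx
        obtain ⟨y, rfl⟩ := hsurjH x hx
        intro j hj
        have hj' : j = i.castSucc ∨ j = Fin.last m := by simpa [hs₂] using hj
        rcases hj' with rfl | rfl
        · show w i.castSucc ⬝ᵥ (x₀ + ψ y) = b i.castSucc
          rw [hconst y]; exact hbval
        · exact hx
    have hHx₁ : H = {x | x - (x₀ + ψ y₁) ∈ V} := by
      rw [hH]
      ext x
      simp only [Set.mem_setOf_eq]
      constructor
      · intro hx
        have : x - (x₀ + ψ y₁) = (x - x₀) - ψ y₁ := by ring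
        rw [this]
        exact Submodule.sub_mem V hx (hψ_mem y₁)
      · intro hx
        have : x - x₀ = (x - (x₀ + ψ y₁)) + ψ y₁ := by ring
        rw [this]
        exact Submodule.add_mem V hx (hψ_mem y₁)
    have hVeq : V₂ = V := by
      ext v
      have h₂ := hsol₂.symm.trans (hsolH.trans hHx₁)
      constructor
      · intro hv
        have hmm : (x₀ + ψ y₁) + v ∈ {x | x - (x₀ + ψ y₁) ∈ V₂} := by
          simp only [Set.mem_setOf_eq, add_sub_cancel_left]; exact hv
        rw [h₂] at hmm
        simpa using hmm
      · intro hv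
        have hmm : (x₀ + ψ y₁) + v ∈ {x | x - (x₀ + ψ y₁) ∈ V} := by
          simp only [Set.mem_setOf_eq, add_sub_cancel_left]; exact hv
        rw [← h₂] at hmm
        simpa using hmm
    rw [hVeq, hV'] at hV₂
    rw [hcard₂] at hV₂
    omega
  · -- dimension condition
    intro s hs
    obtain ⟨x₁, hx₁, V₁, hV₁, hsol₁⟩ := h2 (insert (Fin.last m) (s.map Fin.castSuccEmb))
      (by rw [hcardS₀]; omega)
    rw [hcardS₀] at hV₁
    have hx₁H : x₁ ∈ H := by
      rw [hHdef, hyperplane_eq_solSet]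
      exact solSet_anti w b (by simp) hx₁
    obtain ⟨y₁, rfl⟩ := hsurjH x₁ hx₁H
    have hle : V₁ ≤ V := by
      intro v hv
      have hmem : (x₀ + ψ y₁) + v ∈ solSet w b (insert (Fin.last m) (s.map Fin.castSuccEmb)) := by
        rw [hsol₁]
        simp only [Set.mem_setOf_eq, add_sub_cancel_left]
        exact hv
      have : (x₀ + ψ y₁) + v ∈ H := by
        rw [hHdef, hyperplane_eq_solSet]
        exact solSet_anti w b (by simp) hmem
      rw [hH] at this
      simp only [Set.mem_setOf_eq] at this
      have h2' : x₀ + ψ y₁ + v - x₀ = ψ y₁ + v := by ring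
      rw [h2'] at this
      have := Submodule.sub_mem V this (hψ_mem y₁)
      simpa using this
    set W := V₁.comap ψ with hW
    have hsolW : solSet w'' b'' s = {y | y - y₁ ∈ W} := by
      ext y
      rw [Set.mem_setOf_eq, hW, Submodule.mem_comap, map_sub]
      constructor
      · intro hy
        have := (hsolSet'' s y).mp hy
        rw [hsol₁] at this
        simp only [Set.mem_setOf_eq] at this
        have he : x₀ + ψ y - (x₀ + ψ y₁) = ψ y - ψ y₁ := by ring
        rwa [he] at this
      · intro hy
        rw [hsolSet'' s y, hsol₁]
        simp only [Set.mem_setOf_eq]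
        have he : x₀ + ψ y - (x₀ + ψ y₁) = ψ y - ψ y₁ := by ring
        rwa [he]
    have hrankW : Module.finrank ℝ W = n + 1 - s.card := by
      have e2 := LinearEquiv.ofSubmodule' φ (V₁.comap V.subtype)
      have e1 : (V₁.comap V.subtype) ≃ₗ[ℝ] V₁ := Submodule.comapSubtypeEquivOfLe hle
      have hW2 : Module.finrank ℝ W
          = Module.finrank ℝ ((V₁.comap V.subtype).comap (φ : (Fin (n+1) → ℝ) →ₗ[ℝ] V)) := rfl
      have h2r : Module.finrank ℝ
            ((V₁.comap V.subtype).comap (φ : (Fin (n+1) → ℝ) →ₗ[ℝ] V))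
          = Module.finrank ℝ (V₁.comap V.subtype) := e2.finrank_eq
      have h1r : Module.finrank ℝ (V₁.comap V.subtype) = Module.finrank ℝ V₁ := e1.finrank_eq
      have : Module.finrank ℝ W = Module.finrank ℝ V₁ := hW2.trans (h2r.trans h1r)
      rw [this, hV₁]
      omega
    refine ⟨y₁, ?_, W, hrankW, hsolW⟩
    rw [hsolW]
    simp
  · -- emptiness condition
    intro s hs
    have hempty := h3 (insert (Fin.last m) (s.map Fin.castSuccEmb)) (by rw [hcardS₀]; omega)
    ext y
    simp only [Set.mem_empty_iff_false, iff_false]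
    intro hy
    have := (hsolSet'' s y).mp hy
    rw [hempty] at this
    exact this
  · -- cell correspondence
    ext ε'
    simp only [Set.mem_setOf_eq]
    have hcell : ∀ y, y ∈ cell w'' b'' ε' ↔ (x₀ + ψ y) ∈
        cell (fun i => w i.castSucc) (fun i => b i.castSucc) ε' := by
      intro y
      have heq : ∀ i : Fin m,
          w i.castSucc ⬝ᵥ (x₀ + ψ y) - b i.castSucc = w'' i ⬝ᵥ y - b'' i := by
        intro i
        have hww : (Matrix.vecMul (w i.castSucc) A) ⬝ᵥ y = w'' i ⬝ᵥ y := rfl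
        have hbb : b'' i = b i.castSucc - w i.castSucc ⬝ᵥ x₀ := rfl
        rw [hkey, hww, hbb]
        ring
      constructor
      · intro hy i
        have h := hy i
        have he := heq i
        by_cases hb : ε' i <;>
          simp only [hb, Bool.false_eq_true, if_true, if_false] at h ⊢ <;> linarith
      · intro hy i
        have h := hy i
        have he := heq i
        by_cases hb : ε' i <;>
          simp only [hb, Bool.false_eq_true, if_true, if_false] at h ⊢ <;> linarith
    constructor
    · rintro ⟨x, hx1, hx2⟩
      obtain ⟨y, rfl⟩ := hsurjH x hx2
      exact ⟨y, (hcell y).mpr hx1⟩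
    · rintro ⟨y, hy⟩
      exact ⟨x₀ + ψ y, (hcell y).mp hy, hmemH y⟩

end Trace
end Arr

namespace Arr

theorem count_cells (m : ℕ) : ∀ (n : ℕ) (w : Fin m → Fin n → ℝ) (b : Fin m → ℝ),
    InGeneralPosition w b →
    {ε | (cell w b ε).Nonempty}.ncard = ∑ s ∈ Finset.range (n + 1), m.choose s := by
  induction m with
  | zero =>
    intro n w b _
    have huniv : {ε : Fin 0 → Bool | (cell w b ε).Nonempty} = Set.univ := by
      ext ε
      simp only [Set.mem_setOf_eq, Set.mem_univ, iff_true]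
      exact ⟨0, fun i => i.elim0⟩
    rw [huniv, Set.ncard_univ, Nat.card_eq_fintype_card, sum_choose_zero]
    simp
  | succ m ih =>
    intro n w b hgp
    have hwlast : w (Fin.last m) ≠ 0 := hgp.1 _
    match n, w, b, hgp, hwlast, ih with
    | 0, w, b, hgp, hwlast, ih =>
      exact absurd (funext fun j => j.elim0 : w (Fin.last m) = 0) hwlast
    | 1, w, b, hgp, hwlast, ih =>
      rw [ncard_split w b hwlast, ih 1 _ _ (GP_del hgp), trace_count_dim_one w b hgp,
        sum_choose_succ m 1]
      simp
    | (k+2), w, b, hgp, hwlast, ih =>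
      obtain ⟨w'', b'', hgp'', hsets⟩ := trace_arrangement w b hgp
      rw [ncard_split w b hwlast, ih (k+2) _ _ (GP_del hgp), hsets,
        ih (k+1) w'' b'' hgp'', sum_choose_succ m (k+2)]

end Arr


/-- The number of regions of an arrangement of `m` hyperplanes in general position in
`ℝ^{n₀}` equals `∑_{s=0}^{n₀} binomial(m, s)`. -/
theorem num_regions_general_position {m n₀ : ℕ} (w : Fin m → Fin n₀ → ℝ) (b : Fin m → ℝ)
    (hgp : InGeneralPosition w b) :
    (regionsOf {x : Fin n₀ → ℝ | ∀ i, ∑ j, w i j * x j ≠ b i}).ncard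
      = ∑ s ∈ Finset.range (n₀ + 1), m.choose s := by
  have h : {x : Fin n₀ → ℝ | ∀ i, ∑ j, w i j * x j ≠ b i}
      = {x : Fin n₀ → ℝ | ∀ i, w i ⬝ᵥ x ≠ b i} := rfl
  rw [h, Arr2.ncard_regions w b, Arr.count_cells m n₀ w b hgp]
end

section
/- For any n_0 ≥ 2 and n ≥ 2 there exists an arrangement of n hyperplanes H_1, ..., H_n in R^{n_0} (defined by affine functionals ℓ_1, ..., ℓ_n) such that for every pair a ≤ b in {1, ..., n}, there exists a point x ∈ R^{n_0} with ℓ_j(x) > 0 for all j with a ≤ j ≤ b and ℓ_j(x) < 0 for all other j. -/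
lemma sum_two_support {n₀ : ℕ} (hn₀ : 2 ≤ n₀) (g : Fin n₀ → ℝ)
    (hg : ∀ i : Fin n₀, (i : ℕ) ≠ 0 → (i : ℕ) ≠ 1 → g i = 0) :
    ∑ i, g i = g ⟨0, by omega⟩ + g ⟨1, by omega⟩ := by
  classical
  have h01 : (⟨0, by omega⟩ : Fin n₀) ≠ ⟨1, by omega⟩ := by
    intro h; simpa using congrArg Fin.val h
  rw [← Finset.sum_pair h01]
  apply (Finset.sum_subset (Finset.subset_univ _) _).symm
  intro i _ hi
  simp only [Finset.mem_insert, Finset.mem_singleton] at hi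
  push_neg at hi
  apply hg
  · intro h; exact hi.1 (Fin.ext h)
  · intro h; exact hi.2 (Fin.ext h)

/-- For any `n₀ ≥ 2` and `n ≥ 2` there exists an arrangement of `n` hyperplanes in
`ℝ^{n₀}`, defined by affine functionals `ℓ_j(x) = ⟨w j, x⟩ + b j`, such that for every
pair of indices `a ≤ b'` there is a point `x` with `ℓ_j(x) > 0` exactly for the
consecutive indices `a ≤ j ≤ b'`, and `ℓ_j(x) < 0` for all other `j`. -/
theorem exists_arrangement_consecutive_activations (n₀ n : ℕ) (hn₀ : 2 ≤ n₀) (hn : 2 ≤ n) :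
    ∃ (w : Fin n → Fin n₀ → ℝ) (b : Fin n → ℝ),
      (∀ j, w j ≠ 0) ∧
      ∀ a b' : Fin n, a ≤ b' →
        ∃ x : Fin n₀ → ℝ, ∀ j : Fin n,
          (a ≤ j ∧ j ≤ b' → 0 < (∑ i, w j i * x i) + b j) ∧
          (¬(a ≤ j ∧ j ≤ b') → (∑ i, w j i * x i) + b j < 0) := by
  refine ⟨fun j i => if (i : ℕ) = 0 then (j : ℕ) else if (i : ℕ) = 1 then 1 else 0,
    fun j => -((j : ℕ) : ℝ) ^ 2, ?_, ?_⟩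
  · intro j h
    have := congrFun h ⟨1, by omega⟩
    simp at this
  · intro a b' hab
    refine ⟨fun i => if (i : ℕ) = 0 then ((a : ℕ) : ℝ) + ((b' : ℕ) : ℝ)
      else if (i : ℕ) = 1 then -(((a : ℕ) : ℝ) * ((b' : ℕ) : ℝ)) + 1/2 else 0, ?_⟩
    intro j
    have hsum : (∑ i : Fin n₀, (if (i : ℕ) = 0 then ((j : ℕ) : ℝ) else if (i : ℕ) = 1 then 1 else 0)
        * (if (i : ℕ) = 0 then ((a : ℕ) : ℝ) + ((b' : ℕ) : ℝ)
          else if (i : ℕ) = 1 then -(((a : ℕ) : ℝ) * ((b' : ℕ) : ℝ)) + 1/2 else 0))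
        = ((j : ℕ) : ℝ) * (((a : ℕ) : ℝ) + ((b' : ℕ) : ℝ))
          + (-(((a : ℕ) : ℝ) * ((b' : ℕ) : ℝ)) + 1/2) := by
      rw [sum_two_support hn₀]
      · norm_num
      · intro i h0 h1
        simp [h0, h1]
    rw [hsum] at *
    set A := ((a : ℕ) : ℝ)
    set B := ((b' : ℕ) : ℝ)
    set J := ((j : ℕ) : ℝ)
    constructor
    · rintro ⟨h1, h2⟩
      have hA : A ≤ J := Nat.cast_le.mpr (Fin.le_iff_val_le_val.mp h1)
      have hB : J ≤ B := Nat.cast_le.mpr (Fin.le_iff_val_le_val.mp h2)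
      nlinarith [mul_nonneg (sub_nonneg.mpr hA) (sub_nonneg.mpr hB)]
    · intro h
      have hAB : A ≤ B := Nat.cast_le.mpr (Fin.le_iff_val_le_val.mp hab)
      rcases not_and_or.mp h with h' | h'
      · have : (j : ℕ) + 1 ≤ (a : ℕ) := by
          have := Fin.lt_iff_val_lt_val.mp (not_le.mp h')
          omega
        have hJ : J + 1 ≤ A := by
          have := (Nat.cast_le (α := ℝ)).mpr this; push_cast at this; linarith
        nlinarith [mul_nonneg (sub_nonneg.mpr (le_trans hJ (by linarith : A ≤ B + 1)))
          (by linarith : (0:ℝ) ≤ A - J - 1)]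
      · have : (b' : ℕ) + 1 ≤ (j : ℕ) := by
          have := Fin.lt_iff_val_lt_val.mp (not_le.mp h')
          omega
        have hJ : B + 1 ≤ J := by
          have := (Nat.cast_le (α := ℝ)).mpr this; push_cast at this; linarith
        nlinarith
end

section
/- The maximal number of regions of linearity of functions computed by a rectifier network with n_0 inputs, one hidden layer of n_1 rectifier units, and linear outputs equals ∑_{j=0}^{n_0} binomial(n_1, j). -/
open Set

/-- Componentwise rectifier nonlinearity. -/
def rect {m : ℕ} (x : Fin m → ℝ) : Fin m → ℝ := fun i => max 0 (x i)

/-- A vector-valued function is affine on `U` if it agrees there with `x ↦ A x + b`. -/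
def IsAffineOnVec {n k : ℕ} (f : (Fin n → ℝ) → Fin k → ℝ) (U : Set (Fin n → ℝ)) : Prop :=
  ∃ (A : Matrix (Fin k) (Fin n) ℝ) (b : Fin k → ℝ), ∀ x ∈ U, f x = A.mulVec x + b

/-- `U` is a region of linearity of `f`: a connected open set on which `f` is affine,
such that `f` is not affine on any strictly larger open set. -/
def IsLinearRegionVec {n k : ℕ} (f : (Fin n → ℝ) → Fin k → ℝ) (U : Set (Fin n → ℝ)) : Prop :=
  IsOpen U ∧ IsConnected U ∧ IsAffineOnVec f U ∧
    ∀ V : Set (Fin n → ℝ), IsOpen V → U ⊂ V → ¬ IsAffineOnVec f V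

open Finset

namespace ShallowRect

/-- evaluation of an affine functional with gradient `a` and constant `c`. -/
def ev {d : ℕ} (a : Fin d → ℝ) (c : ℝ) (x : Fin d → ℝ) : ℝ := (∑ k, a k * x k) + c

/-- sign condition -/
def sOk (b : Bool) (v : ℝ) : Prop := if b then 0 < v else v < 0

def Realized {n d : ℕ} (a : Fin n → Fin d → ℝ) (c : Fin n → ℝ) : Set (Fin n → Bool) :=
  {s | ∃ x, ∀ i, sOk (s i) (ev (a i) (c i) x)}

def M (d n : ℕ) : ℕ := ∑ j ∈ Finset.range (d + 1), n.choose j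

lemma M_zero_right (d : ℕ) : M d 0 = 1 := by
  induction d with
  | zero => simp [M]
  | succ d ih =>
      rw [M, Finset.sum_range_succ, ← M, ih, Nat.choose_eq_zero_of_lt (by omega)]

lemma M_mono (d n : ℕ) : M d n ≤ M d (n + 1) :=
  Finset.sum_le_sum fun j _ => Nat.choose_le_choose j (Nat.le_succ n)

lemma M_pascal (d n : ℕ) : M (d + 1) (n + 1) = M (d + 1) n + M d n := by
  have e1 : M (d+1) (n+1) = (∑ i ∈ Finset.range (d+1), (n+1).choose (i+1)) + 1 := by
    rw [M, Finset.sum_range_succ']; simp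
  have e2 : M (d+1) n = (∑ i ∈ Finset.range (d+1), n.choose (i+1)) + 1 := by
    rw [M, Finset.sum_range_succ']; simp
  have e3 : ∀ i, (n + 1).choose (i + 1) = n.choose i + n.choose (i + 1) :=
    fun i => Nat.choose_succ_succ n i
  rw [e1, e2, M]
  simp only [e3, Finset.sum_add_distrib]
  omega

lemma ev_combo {d : ℕ} (a : Fin d → ℝ) (c : ℝ) (x y : Fin d → ℝ) (s t : ℝ) (h : s + t = 1) :
    ev a c (s • x + t • y) = s * ev a c x + t * ev a c y := by
  have hc : ∀ k, a k * (s * x k + t * y k) = s * (a k * x k) + t * (a k * y k) := by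
    intro k; ring
  simp only [ev, Pi.add_apply, Pi.smul_apply, smul_eq_mul, hc, Finset.sum_add_distrib,
    ← Finset.mul_sum]
  have : c = s * c + t * c := by rw [← add_mul, h, one_mul]
  linarith

lemma ev_dir {d : ℕ} (a : Fin d → ℝ) (c : ℝ) (x v : Fin d → ℝ) (t : ℝ) :
    ev a c (x + t • v) = ev a c x + t * ∑ k, a k * v k := by
  have hc : ∀ k, a k * (x k + t * v k) = a k * x k + t * (a k * v k) := by
    intro k; ring
  simp only [ev, Pi.add_apply, Pi.smul_apply, smul_eq_mul, hc, Finset.sum_add_distrib,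
    ← Finset.mul_sum]
  ring

/-- an affine functional vanishing on a nonempty open set is trivial -/
lemma ev_eq_zero_of_open {d : ℕ} {a : Fin d → ℝ} {c : ℝ} {U : Set (Fin d → ℝ)}
    (hU : IsOpen U) {x0 : Fin d → ℝ} (hx0 : x0 ∈ U)
    (h : ∀ x ∈ U, ev a c x = 0) : a = 0 ∧ c = 0 := by
  obtain ⟨ε, hε, hball⟩ := Metric.isOpen_iff.1 hU x0 hx0
  have ha : a = 0 := by
    funext k
    have hmem : x0 + (ε / 2) • (Pi.single k (1:ℝ) : Fin d → ℝ) ∈ U := by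
      apply hball
      rw [Metric.mem_ball, dist_pi_lt_iff hε]
      intro i
      simp only [Pi.add_apply, Pi.smul_apply, smul_eq_mul, Real.dist_eq]
      rcases eq_or_ne i k with rfl | hik
      · rw [Pi.single_eq_same]
        have he : x0 i + ε / 2 * 1 - x0 i = ε / 2 := by ring
        rw [he, abs_of_pos (by linarith)]
        linarith
      · rw [Pi.single_eq_of_ne hik]
        have he : x0 i + ε / 2 * 0 - x0 i = 0 := by ring
        rw [he, abs_zero]
        exact hε
    have h1 := h _ hmem
    rw [ev_dir, h _ hx0] at h1
    have h2 : (∑ j, a j * (Pi.single k (1:ℝ) : Fin d → ℝ) j) = a k := by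
      rw [Finset.sum_eq_single k]
      · simp
      · intro b _ hb; simp [Pi.single_apply, hb]
      · simp
    rw [h2, zero_add] at h1
    have := mul_eq_zero.1 h1
    rcases this with h' | h'
    · linarith
    · simpa using h'
  refine ⟨ha, ?_⟩
  have := h _ hx0
  rw [ha] at this
  simpa [ev] using this

section kap

variable {d : ℕ} (j : Fin (d + 1)) (al : Fin (d + 1) → ℝ) (cl : ℝ)

/-- affine parametrization of the hyperplane `ev al cl = 0` -/
noncomputable def kap (y : Fin d → ℝ) : Fin (d + 1) → ℝ :=
  j.insertNth ((-cl - ∑ k, al (j.succAbove k) * y k) / al j) y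

lemma ev_kap (hal : al j ≠ 0) (a : Fin (d + 1) → ℝ) (c : ℝ) (y : Fin d → ℝ) :
    ev a c (kap j al cl y) =
      ev (fun k => a (j.succAbove k) - a j / al j * al (j.succAbove k))
        (c - a j / al j * cl) y := by
  have hsum : ∀ (f : Fin (d+1) → ℝ), (∑ m, f m * (kap j al cl y) m) =
      f j * ((-cl - ∑ k, al (j.succAbove k) * y k) / al j)
        + ∑ k, f (j.succAbove k) * y k := by
    intro f
    rw [Fin.sum_univ_succAbove (fun m => f m * (kap j al cl y) m) j]
    simp [kap, Fin.insertNth_apply_same, Fin.insertNth_apply_succAbove]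
  rw [ev, hsum]
  have hrhs : (∑ k, (a (j.succAbove k) - a j / al j * al (j.succAbove k)) * y k) =
      (∑ k, a (j.succAbove k) * y k) - a j / al j * ∑ k, al (j.succAbove k) * y k := by
    rw [Finset.mul_sum, ← Finset.sum_sub_distrib]
    exact Finset.sum_congr rfl fun k _ => by ring
  rw [ev, hrhs]
  field_simp
  ring

lemma ev_kap_self (hal : al j ≠ 0) (y : Fin d → ℝ) :
    ev al cl (kap j al cl y) = 0 := by
  rw [ev_kap j al cl hal]
  simp [ev, div_self hal]

lemma kap_eq (hal : al j ≠ 0) (x : Fin (d + 1) → ℝ) (hx : ev al cl x = 0) :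
    kap j al cl (fun k => x (j.succAbove k)) = x := by
  funext m
  rcases eq_or_ne m j with rfl | hm
  · rw [kap, Fin.insertNth_apply_same]
    have h1 : (∑ k, al k * x k) + cl = 0 := hx
    rw [Fin.sum_univ_succAbove (fun k => al k * x k) m] at h1
    field_simp
    linarith
  · obtain ⟨k, rfl⟩ := Fin.exists_succAbove_eq hm
    rw [kap, Fin.insertNth_apply_succAbove]

end kap

end ShallowRect

namespace ShallowRect

lemma realized_card_le : ∀ (n : ℕ) (d : ℕ) (a : Fin n → Fin d → ℝ) (c : Fin n → ℝ),
    (Realized a c).ncard ≤ M d n := by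
  intro n
  induction n with
  | zero =>
      intro d a c
      calc (Realized a c).ncard ≤ (Set.univ : Set (Fin 0 → Bool)).ncard :=
            Set.ncard_le_ncard (Set.subset_univ _) Set.finite_univ
        _ = 1 := by rw [Set.ncard_univ, Nat.card_eq_fintype_card]; simp
        _ ≤ M d 0 := by rw [M_zero_right]
  | succ n ih =>
      intro d a c
      classical
      by_cases hconst : ∀ j, a (Fin.last n) j = 0
      · -- last functional is constant
        have hlastval : ∀ u, u ∈ Realized a c →
            u (Fin.last n) = decide (0 < c (Fin.last n)) := by
          rintro u ⟨z, hz⟩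
          have h1 := hz (Fin.last n)
          have hev : ev (a (Fin.last n)) (c (Fin.last n)) z = c (Fin.last n) := by
            simp [ev, hconst]
          rw [hev] at h1
          cases hul : u (Fin.last n) <;> rw [hul] at h1 <;> simp [sOk] at h1
          · exact (decide_eq_false (by linarith)).symm
          · exact (decide_eq_true h1).symm
        have hinj : Set.InjOn (fun s => s ∘ Fin.castSucc) (Realized a c) := by
          intro s hs t ht hst
          funext m
          cases m using Fin.lastCases with
          | last => rw [hlastval s hs, hlastval t ht]
          | cast i => exact congrFun hst i
        have hsub : (fun s => s ∘ Fin.castSucc) '' Realized a c ⊆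
            Realized (fun i : Fin n => a i.castSucc) (fun i => c i.castSucc) := by
          rintro s' ⟨s, ⟨x, hx⟩, rfl⟩
          exact ⟨x, fun i => hx i.castSucc⟩
        calc (Realized a c).ncard
            = ((fun s => s ∘ Fin.castSucc) '' Realized a c).ncard :=
              (Set.ncard_image_of_injOn hinj).symm
          _ ≤ (Realized (fun i : Fin n => a i.castSucc) (fun i => c i.castSucc)).ncard :=
              Set.ncard_le_ncard hsub (Set.toFinite _)
          _ ≤ M d n := ih d _ _
          _ ≤ M d (n + 1) := M_mono d n
      · push_neg at hconst
        obtain ⟨j, hj⟩ := hconst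
        cases d with
        | zero => exact j.elim0
        | succ d' =>
          set lst := Fin.last n with hlst
          set ini : (Fin (n+1) → Bool) → (Fin n → Bool) := fun s => s ∘ Fin.castSucc with hini
          set R₁ : Set (Fin (n+1) → Bool) := {s | s ∈ Realized a c ∧ s lst = true} with hR₁
          set R₂ : Set (Fin (n+1) → Bool) := {s | s ∈ Realized a c ∧ s lst = false} with hR₂
          have hsplit : Realized a c = R₁ ∪ R₂ := by
            ext s
            simp only [hR₁, hR₂, Set.mem_union, Set.mem_setOf_eq]
            cases h : s lst <;> tauto
          have hdisj : Disjoint R₁ R₂ := by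
            rw [Set.disjoint_left]
            rintro s ⟨_, h1⟩ ⟨_, h2⟩
            rw [h1] at h2
            exact Bool.noConfusion h2
          have hinj₁ : Set.InjOn ini R₁ := by
            rintro s ⟨_, hs⟩ t ⟨_, ht⟩ hst
            funext m
            cases m using Fin.lastCases with
            | last => rw [hs, ht]
            | cast i => exact congrFun hst i
          have hinj₂ : Set.InjOn ini R₂ := by
            rintro s ⟨_, hs⟩ t ⟨_, ht⟩ hst
            funext m
            cases m using Fin.lastCases with
            | last => rw [hs, ht]
            | cast i => exact congrFun hst i
          have hsub : ini '' R₁ ∪ ini '' R₂ ⊆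
              Realized (fun i : Fin n => a i.castSucc) (fun i => c i.castSucc) := by
            rintro s' (⟨s, ⟨⟨x, hx⟩, _⟩, rfl⟩ | ⟨s, ⟨⟨x, hx⟩, _⟩, rfl⟩) <;>
              exact ⟨x, fun i => hx i.castSucc⟩
          have hint : ini '' R₁ ∩ ini '' R₂ ⊆
              Realized
                (fun (i : Fin n) (k : Fin d') => a i.castSucc (j.succAbove k) -
                  a i.castSucc j / a lst j * a lst (j.succAbove k))
                (fun i => c i.castSucc - a i.castSucc j / a lst j * c lst) := by
            rintro s' ⟨⟨sp, ⟨⟨xp, hxp⟩, hsp⟩, hprojp⟩, ⟨sm, ⟨⟨xm, hxm⟩, hsm⟩, hprojm⟩⟩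
            set p := ev (a lst) (c lst) xp with hp
            set q := ev (a lst) (c lst) xm with hq
            have hppos : 0 < p := by
              have := hxp lst
              rw [hsp] at this
              exact this
            have hqneg : q < 0 := by
              have := hxm lst
              rw [hsm] at this
              exact this
            have hpq : 0 < p - q := by linarith
            set t := p / (p - q) with ht
            have ht0 : 0 < t := div_pos hppos hpq
            have ht1 : t < 1 := (div_lt_one hpq).2 (by linarith)
            set x₀ := (1 - t) • xp + t • xm with hx₀
            have hlast0 : ev (a lst) (c lst) x₀ = 0 := by
              rw [hx₀, ev_combo _ _ _ _ _ _ (by ring), ← hp, ← hq]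
              have : t * (p - q) = p := div_mul_cancel₀ p hpq.ne'
              nlinarith [this]
            have hsigns : ∀ i : Fin n,
                sOk (s' i) (ev (a i.castSucc) (c i.castSucc) x₀) := by
              intro i
              have h1 := hxp i.castSucc
              have h2 := hxm i.castSucc
              rw [show sp i.castSucc = s' i from congrFun hprojp i] at h1
              rw [show sm i.castSucc = s' i from congrFun hprojm i] at h2
              rw [hx₀, ev_combo _ _ _ _ _ _ (by ring)]
              cases hs'i : s' i <;> rw [hs'i] at h1 h2 <;> simp only [sOk, if_true, if_false,
                Bool.false_eq_true, ite_true, ite_false] at h1 h2 ⊢ <;> nlinarith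
            refine ⟨fun k => x₀ (j.succAbove k), fun i => ?_⟩
            have hkap : kap j (a lst) (c lst) (fun k => x₀ (j.succAbove k)) = x₀ :=
              kap_eq j (a lst) (c lst) hj x₀ hlast0
            have := ev_kap j (a lst) (c lst) hj (a i.castSucc) (c i.castSucc)
              (fun k => x₀ (j.succAbove k))
            rw [hkap] at this
            rw [← this]
            exact hsigns i
          calc (Realized a c).ncard = R₁.ncard + R₂.ncard := by
                rw [hsplit, Set.ncard_union_eq hdisj (Set.toFinite _) (Set.toFinite _)]
            _ = (ini '' R₁).ncard + (ini '' R₂).ncard := by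
                rw [Set.ncard_image_of_injOn hinj₁, Set.ncard_image_of_injOn hinj₂]
            _ = (ini '' R₁ ∪ ini '' R₂).ncard + (ini '' R₁ ∩ ini '' R₂).ncard :=
                (Set.ncard_union_add_ncard_inter _ _ (Set.toFinite _) (Set.toFinite _)).symm
            _ ≤ M (d' + 1) n + M d' n :=
                add_le_add
                  (le_trans (Set.ncard_le_ncard hsub (Set.toFinite _)) (ih _ _ _))
                  (le_trans (Set.ncard_le_ncard hint (Set.toFinite _)) (ih _ _ _))
            _ = M (d' + 1) (n + 1) := (M_pascal d' n).symm

end ShallowRect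


namespace ShallowRect

variable {n d m : ℕ}

lemma ev_continuous (a : Fin d → ℝ) (c : ℝ) : Continuous (ev a c) := by
  unfold ev
  exact (continuous_finset_sum _ fun k _ => continuous_const.mul (continuous_apply k)).add
    continuous_const

/-- The open cell of a sign vector. -/
def cell (a : Fin n → Fin d → ℝ) (c : Fin n → ℝ) (s : Fin n → Bool) : Set (Fin d → ℝ) :=
  {x | ∀ i, sOk (s i) (ev (a i) (c i) x)}

lemma realized_iff_cell_nonempty (a : Fin n → Fin d → ℝ) (c : Fin n → ℝ) (s : Fin n → Bool) :
    s ∈ Realized a c ↔ (cell a c s).Nonempty := Iff.rfl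

lemma isOpen_cell (a : Fin n → Fin d → ℝ) (c : Fin n → ℝ) (s : Fin n → Bool) :
    IsOpen (cell a c s) := by
  have : cell a c s = ⋂ i, {x | sOk (s i) (ev (a i) (c i) x)} := by
    ext x; simp [cell, Set.mem_iInter]
  rw [this]
  refine isOpen_iInter_of_finite fun i => ?_
  cases hsi : s i
  · simpa [sOk, hsi] using isOpen_lt (ev_continuous (a i) (c i)) continuous_const
  · simpa [sOk, hsi] using isOpen_lt continuous_const (ev_continuous (a i) (c i))

lemma convex_cell (a : Fin n → Fin d → ℝ) (c : Fin n → ℝ) (s : Fin n → Bool) :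
    Convex ℝ (cell a c s) := by
  intro x hx y hy p q hp hq hpq
  intro i
  have h1 := hx i
  have h2 := hy i
  have hcombo := ev_combo (a i) (c i) x y p q hpq
  cases hsi : s i <;> rw [hsi] at h1 h2 <;> simp only [sOk, if_true, if_false,
    Bool.false_eq_true, ite_true, ite_false] at h1 h2 ⊢ <;> rw [hcombo] <;>
    rcases hp.lt_or_eq with hp' | hp'
  · nlinarith [mul_neg_of_pos_of_neg hp' h1, mul_nonpos_of_nonneg_of_nonpos hq h2.le]
  · nlinarith [mul_neg_of_pos_of_neg (show 0 < q by linarith) h2]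
  · nlinarith [mul_pos hp' h1, mul_nonneg hq h2.le]
  · nlinarith [mul_pos (show 0 < q by linarith) h2]

/-- The matrix of the affine map computed by the network on the cell of `s`. -/
def AMat (V : Matrix (Fin m) (Fin n) ℝ) (a : Fin n → Fin d → ℝ) (s : Fin n → Bool) :
    Matrix (Fin m) (Fin d) ℝ :=
  Matrix.of fun i' k => ∑ i, V i' i * (if s i then a i k else 0)

def bVec (V : Matrix (Fin m) (Fin n) ℝ) (cout : Fin m → ℝ) (c : Fin n → ℝ) (s : Fin n → Bool) :
    Fin m → ℝ :=
  fun i' => (∑ i, V i' i * (if s i then c i else 0)) + cout i'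

lemma affine_formula (V : Matrix (Fin m) (Fin n) ℝ) (cout : Fin m → ℝ)
    (a : Fin n → Fin d → ℝ) (c : Fin n → ℝ) (s : Fin n → Bool) (x : Fin d → ℝ) :
    V.mulVec (fun i => if s i then ev (a i) (c i) x else 0) + cout =
      (AMat V a s).mulVec x + bVec V cout c s := by
  funext i'
  simp only [Matrix.mulVec, dotProduct, Pi.add_apply, AMat, bVec, Matrix.of_apply]
  have hsplit : ∀ i, V i' i * (if s i then ev (a i) (c i) x else 0)
      = (∑ k, V i' i * (if s i then a i k else 0) * x k) + V i' i * (if s i then c i else 0) := by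
    intro i
    cases hsi : s i
    · simp
    · simp only [if_true]
      rw [ev, mul_add, Finset.mul_sum]
      congr 1
      exact Finset.sum_congr rfl fun k _ => by ring
  calc (∑ i, V i' i * (if s i then ev (a i) (c i) x else 0)) + cout i'
      = (∑ i, ((∑ k, V i' i * (if s i then a i k else 0) * x k)
          + V i' i * (if s i then c i else 0))) + cout i' := by
        rw [Finset.sum_congr rfl fun i _ => hsplit i]
    _ = (∑ k, (∑ i, V i' i * (if s i then a i k else 0)) * x k)
          + ((∑ i, V i' i * (if s i then c i else 0)) + cout i') := by
        rw [Finset.sum_add_distrib, Finset.sum_comm]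
        simp only [Finset.sum_mul]
        ring

/-- two affine representations agreeing on a nonempty open set coincide -/
lemma affine_agree {U : Set (Fin d → ℝ)} (hU : IsOpen U) {x0 : Fin d → ℝ} (hx0 : x0 ∈ U)
    {A A' : Matrix (Fin m) (Fin d) ℝ} {β β' : Fin m → ℝ}
    (h : ∀ x ∈ U, A.mulVec x + β = A'.mulVec x + β') : A = A' ∧ β = β' := by
  have hrow : ∀ i, (fun k => A i k - A' i k) = 0 ∧ β i - β' i = 0 := by
    intro i
    apply ev_eq_zero_of_open hU hx0
    intro x hx
    have := congrFun (h x hx) i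
    simp only [Pi.add_apply, Matrix.mulVec, dotProduct] at this
    simp only [ev, sub_mul, Finset.sum_sub_distrib]
    linarith
  constructor
  · ext i k
    have := congrFun (hrow i).1 k
    simpa [sub_eq_zero] using this
  · funext i
    have := (hrow i).2
    linarith

/-- a region of linearity absorbs any connected open set of affinity meeting it. -/
lemma region_absorb {k : ℕ} {f : (Fin d → ℝ) → Fin k → ℝ} {U : Set (Fin d → ℝ)}
    (hU : IsLinearRegionVec f U) {C : Set (Fin d → ℝ)} (hCopen : IsOpen C)
    (hCaff : IsAffineOnVec f C) (hmeet : (U ∩ C).Nonempty) : C ⊆ U := by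
  obtain ⟨hUopen, hUconn, ⟨A, β, hAβ⟩, hmax⟩ := hU
  obtain ⟨A', β', hA'⟩ := hCaff
  obtain ⟨x0, hx0U, hx0C⟩ := hmeet
  have hagree : A = A' ∧ β = β' := by
    apply affine_agree (hUopen.inter hCopen) (Set.mem_inter hx0U hx0C)
    intro x hx
    rw [← hAβ x hx.1, hA' x hx.2]
  have haff : IsAffineOnVec f (U ∪ C) := by
    refine ⟨A, β, fun x hx => ?_⟩
    rcases hx with h | h
    · exact hAβ x h
    · rw [hA' x h, hagree.1, hagree.2]
  by_contra hnot
  have hss : U ⊂ U ∪ C := by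
    refine ⟨Set.subset_union_left, fun hsub => hnot fun y hy => hsub (Or.inr hy)⟩
  exact hmax (U ∪ C) (hUopen.union hCopen) hss haff

lemma region_eq_of_inter {k : ℕ} {f : (Fin d → ℝ) → Fin k → ℝ} {U U' : Set (Fin d → ℝ)}
    (h : IsLinearRegionVec f U) (h' : IsLinearRegionVec f U')
    (hmeet : (U ∩ U').Nonempty) : U = U' := by
  have h1 : U' ⊆ U := region_absorb h h'.1 h'.2.2.1 hmeet
  have h2 : U ⊆ U' := region_absorb h' h.1 h.2.2.1 (by rwa [Set.inter_comm] at hmeet)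
  exact Set.Subset.antisymm h2 h1

/-- a nonempty open set contains a point where finitely many nontrivial affine
functionals are all nonzero -/
lemma exists_nonzero_point {U : Set (Fin d → ℝ)} (hU : IsOpen U) (hne : U.Nonempty)
    (a : Fin n → Fin d → ℝ) (c : Fin n → ℝ) (h : ∀ i, ¬(a i = 0 ∧ c i = 0)) :
    ∃ x ∈ U, ∀ i, ev (a i) (c i) x ≠ 0 := by
  classical
  have key : ∀ t : Finset (Fin n), ∃ U' : Set (Fin d → ℝ),
      IsOpen U' ∧ U'.Nonempty ∧ U' ⊆ U ∧ ∀ i ∈ t, ∀ x ∈ U', ev (a i) (c i) x ≠ 0 := by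
    intro t
    induction t using Finset.induction_on with
    | empty => exact ⟨U, hU, hne, Set.Subset.rfl, by simp⟩
    | insert _ _ hnotmem ih =>
        rename_i i t'
        obtain ⟨U', hU'open, hU'ne, hU'sub, hU'⟩ := ih
        by_cases hcase : ∃ x ∈ U', ev (a i) (c i) x ≠ 0
        · obtain ⟨x1, hx1, hx1ne⟩ := hcase
          refine ⟨U' ∩ {x | ev (a i) (c i) x ≠ 0}, ?_, ⟨x1, hx1, hx1ne⟩,
            fun y hy => hU'sub hy.1, ?_⟩
          · exact hU'open.inter (isOpen_compl_singleton.preimage (ev_continuous _ _))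
          · intro i' hi' x hx
            rcases Finset.mem_insert.1 hi' with rfl | hmem
            · exact hx.2
            · exact hU' i' hmem x hx.1
        · push_neg at hcase
          obtain ⟨x1, hx1⟩ := hU'ne
          exact absurd (ev_eq_zero_of_open hU'open hx1 hcase) (h i)
  obtain ⟨U', hU'open, ⟨x, hx⟩, hU'sub, hU'⟩ := key Finset.univ
  exact ⟨x, hU'sub hx, fun i => hU' i (Finset.mem_univ i) x hx⟩

end ShallowRect

namespace ShallowRect

lemma sOk_of_ne {v : ℝ} (hv : v ≠ 0) : sOk (decide (0 < v)) v := by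
  rcases lt_or_gt_of_ne hv with h | h
  · simp [sOk, not_lt.2 h.le, h]
  · simp [sOk, h]

lemma max_eq_ite_of_sOk {bb : Bool} {v : ℝ} (h : sOk bb v) :
    max 0 v = if bb then v else 0 := by
  cases bb
  · simp only [sOk, Bool.false_eq_true, if_false, ite_false] at h ⊢
    exact max_eq_left h.le
  · simp only [sOk, if_true, ite_true] at h ⊢
    exact max_eq_right h.le

lemma regions_card_le (n₀ n₁ m : ℕ) (W : Matrix (Fin n₁) (Fin n₀) ℝ) (b : Fin n₁ → ℝ)
    (V : Matrix (Fin m) (Fin n₁) ℝ) (cout : Fin m → ℝ) :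
    {U : Set (Fin n₀ → ℝ) |
      IsLinearRegionVec (fun x => V.mulVec (rect (W.mulVec x + b)) + cout) U}.ncard
      ≤ M n₀ n₁ := by
  classical
  set f : (Fin n₀ → ℝ) → Fin m → ℝ := fun x => V.mulVec (rect (W.mulVec x + b)) + cout with hf
  set P : Fin n₁ → Prop := fun i => (∀ k, W i k = 0) ∧ b i = 0 with hP
  set a : Fin n₁ → Fin n₀ → ℝ := fun i => if P i then 0 else fun k => W i k with ha
  set c : Fin n₁ → ℝ := fun i => if P i then -1 else b i with hc
  have hnz : ∀ i, ¬(a i = 0 ∧ c i = 0) := by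
    rintro i ⟨h1, h2⟩
    by_cases hp : P i
    · rw [hc] at h2
      simp only [if_pos hp] at h2
      norm_num at h2
    · apply hp
      rw [ha] at h1
      rw [hc] at h2
      simp only [if_neg hp] at h1 h2
      exact ⟨fun k => congrFun h1 k, h2⟩
  have hrect : ∀ s x, x ∈ cell a c s →
      rect (W.mulVec x + b) = fun i => if s i then ev (a i) (c i) x else 0 := by
    intro s x hx
    funext i
    have hxi := hx i
    show max 0 ((W.mulVec x + b) i) = _
    by_cases hp : P i
    · have hzero : (W.mulVec x + b) i = 0 := by
        simp only [Pi.add_apply, Matrix.mulVec, dotProduct, hp.2, add_zero]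
        exact Finset.sum_eq_zero fun k _ => by rw [hp.1 k, zero_mul]
      have hsi : s i = false := by
        by_contra hs
        rw [Bool.not_eq_false] at hs
        rw [hs] at hxi
        have hev : ev (a i) (c i) x = -1 := by
          simp only [ev, ha, hc, if_pos hp, Pi.zero_apply, zero_mul, Finset.sum_const_zero,
            zero_add]
        rw [hev] at hxi
        simp only [sOk, if_true, ite_true] at hxi
        linarith
      rw [hzero, hsi]
      simp
    · have hev : (W.mulVec x + b) i = ev (a i) (c i) x := by
        simp only [ev, ha, hc, if_neg hp, Pi.add_apply, Matrix.mulVec, dotProduct]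
      rw [hev]
      exact max_eq_ite_of_sOk hxi
  have hcellaff : ∀ s, IsAffineOnVec f (cell a c s) := by
    intro s
    refine ⟨AMat V a s, bVec V cout c s, fun x hx => ?_⟩
    show V.mulVec (rect (W.mulVec x + b)) + cout = _
    rw [hrect s x hx, affine_formula]
  set F : Set (Fin n₀ → ℝ) → (Fin n₁ → Bool) := fun U =>
    if h : ∃ x, x ∈ U ∧ ∀ i, ev (a i) (c i) x ≠ 0 then
      fun i => decide (0 < ev (a i) (c i) h.choose) else fun _ => false with hF
  have hFspec : ∀ U, IsLinearRegionVec f U → ∃ x ∈ cell a c (F U), x ∈ U := by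
    intro U hU
    have hex : ∃ x, x ∈ U ∧ ∀ i, ev (a i) (c i) x ≠ 0 := by
      obtain ⟨x, hxU, hx⟩ := exists_nonzero_point hU.1 hU.2.1.nonempty a c hnz
      exact ⟨x, hxU, hx⟩
    refine ⟨hex.choose, ?_, hex.choose_spec.1⟩
    intro i
    rw [hF]
    simp only [dif_pos hex]
    exact sOk_of_ne (hex.choose_spec.2 i)
  have hmem : ∀ U ∈ {U | IsLinearRegionVec f U}, F U ∈ Realized a c := by
    intro U hU
    obtain ⟨x, hxc, _⟩ := hFspec U hU
    exact ⟨x, hxc⟩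
  have hinj : Set.InjOn F {U | IsLinearRegionVec f U} := by
    intro U hU U' hU' hFeq
    obtain ⟨x, hxc, hxU⟩ := hFspec U hU
    obtain ⟨x', hx'c, hx'U'⟩ := hFspec U' hU'
    rw [hFeq] at hxc
    have h1 : cell a c (F U') ⊆ U :=
      region_absorb hU (isOpen_cell a c (F U')) (hcellaff _) ⟨x, hxU, hxc⟩
    exact region_eq_of_inter hU hU' ⟨x', h1 hx'c, hx'U'⟩
  calc {U : Set (Fin n₀ → ℝ) | IsLinearRegionVec f U}.ncard
      ≤ (Realized a c).ncard :=
        Set.ncard_le_ncard_of_injOn F hmem hinj (Set.toFinite _)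
    _ ≤ M n₀ n₁ := realized_card_le n₁ n₀ a c

end ShallowRect

namespace ShallowRect

variable {n d : ℕ}

lemma ite_vec_eq (a : Fin n → Fin d → ℝ) (c : Fin n → ℝ) (s : Fin n → Bool) (x : Fin d → ℝ) :
    (AMat (1 : Matrix (Fin n) (Fin n) ℝ) a s).mulVec x + bVec 1 0 c s =
      fun i => if s i then ev (a i) (c i) x else 0 := by
  rw [← affine_formula (1 : Matrix (Fin n) (Fin n) ℝ) 0 a c s x, Matrix.one_mulVec, add_zero]

lemma cellaff (a : Fin n → Fin d → ℝ) (c : Fin n → ℝ) (s : Fin n → Bool) :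
    IsAffineOnVec (fun x i => max 0 (ev (a i) (c i) x)) (cell a c s) := by
  refine ⟨AMat (1 : Matrix (Fin n) (Fin n) ℝ) a s, bVec 1 0 c s, fun x hx => ?_⟩
  rw [ite_vec_eq]
  exact funext fun i => max_eq_ite_of_sOk (hx i)

lemma mem_cell_of_affine_eq {a : Fin n → Fin d → ℝ} {c : Fin n → ℝ}
    (hnz : ∀ i, a i ≠ 0) (s : Fin n → Bool) {Vs : Set (Fin d → ℝ)} (hV : IsOpen Vs)
    (hfa : ∀ x ∈ Vs, ∀ i, max 0 (ev (a i) (c i) x) = if s i then ev (a i) (c i) x else 0)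
    {y : Fin d → ℝ} (hy : y ∈ Vs) : y ∈ cell a c s := by
  intro i
  obtain ⟨k₀, hk₀⟩ : ∃ k, a i k ≠ 0 := by
    by_contra h; push_neg at h; exact hnz i (funext h)
  have hPpos : 0 < ∑ k, a i k * a i k := by
    have h1 : a i k₀ * a i k₀ ≤ ∑ k, a i k * a i k :=
      Finset.single_le_sum (f := fun k => a i k * a i k) (fun k _ => mul_self_nonneg _)
        (Finset.mem_univ k₀)
    nlinarith [mul_self_pos.2 hk₀]
  obtain ⟨ε, hε, hball⟩ := Metric.isOpen_iff.1 hV y hy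
  set S : ℝ := ∑ k, |a i k| with hS
  have hS0 : 0 ≤ S := Finset.sum_nonneg fun k _ => abs_nonneg _
  have hτmem : ∀ τ : ℝ, |τ| ≤ ε / (2 * S + 1) → y + τ • a i ∈ Vs := by
    intro τ hτ
    apply hball
    rw [Metric.mem_ball, dist_pi_lt_iff hε]
    intro k
    simp only [Pi.add_apply, Pi.smul_apply, smul_eq_mul, Real.dist_eq]
    have h1 : y k + τ * a i k - y k = τ * a i k := by ring
    rw [h1, abs_mul]
    have h2 : |a i k| ≤ S :=
      Finset.single_le_sum (f := fun k => |a i k|) (fun k _ => abs_nonneg _) (Finset.mem_univ k)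
    calc |τ| * |a i k| ≤ (ε / (2 * S + 1)) * S := by
          apply mul_le_mul hτ h2 (abs_nonneg _) (by positivity)
      _ < ε := by
          rw [div_mul_eq_mul_div, div_lt_iff₀ (by linarith)]
          nlinarith
  set τ₀ : ℝ := ε / (2 * S + 1) with hτ₀
  have hτ₀pos : 0 < τ₀ := by positivity
  have hyi := hfa y hy i
  cases hsi : s i
  · rw [hsi] at hyi; simp only [Bool.false_eq_true, if_false, ite_false] at hyi
    simp only [sOk, hsi, Bool.false_eq_true, if_false, ite_false]
    rcases lt_trichotomy (ev (a i) (c i) y) 0 with h | h | h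
    · exact h
    · exfalso
      have hz := hfa _ (hτmem τ₀ (by rw [abs_of_pos hτ₀pos])) i
      rw [hsi] at hz; simp only [Bool.false_eq_true, if_false, ite_false] at hz
      rw [ev_dir] at hz
      have hpos : 0 < ev (a i) (c i) y + τ₀ * ∑ k, a i k * a i k := by
        rw [h, zero_add]; positivity
      rw [max_eq_right hpos.le] at hz
      linarith
    · exfalso
      rw [max_eq_right h.le] at hyi
      linarith
  · rw [hsi] at hyi; simp only [if_true, ite_true] at hyi
    simp only [sOk, hsi, if_true, ite_true]
    rcases lt_trichotomy (ev (a i) (c i) y) 0 with h | h | h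
    · exfalso
      rw [max_eq_left h.le] at hyi
      linarith
    · exfalso
      have hz := hfa _ (hτmem (-τ₀) (by rw [abs_neg, abs_of_pos hτ₀pos])) i
      rw [hsi] at hz; simp only [if_true, ite_true] at hz
      rw [ev_dir] at hz
      have hneg : ev (a i) (c i) y + (-τ₀) * ∑ k, a i k * a i k < 0 := by
        rw [h, zero_add]
        nlinarith
      rw [max_eq_left hneg.le] at hz
      linarith
    · exact h

lemma regionSet_eq {a : Fin n → Fin d → ℝ} {c : Fin n → ℝ} (hnz : ∀ i, a i ≠ 0) :
    {U | IsLinearRegionVec (fun x (i : Fin n) => max 0 (ev (a i) (c i) x)) U}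
      = (fun s => cell a c s) '' Realized a c := by
  classical
  set f : (Fin d → ℝ) → Fin n → ℝ := fun x i => max 0 (ev (a i) (c i) x) with hfdef
  ext U
  simp only [Set.mem_setOf_eq, Set.mem_image]
  constructor
  · intro hU
    have hnz' : ∀ i, ¬(a i = 0 ∧ c i = 0) := fun i h => hnz i h.1
    obtain ⟨x₀, hx₀U, hx₀⟩ := exists_nonzero_point hU.1 hU.2.1.nonempty a c hnz'
    set s : Fin n → Bool := fun i => decide (0 < ev (a i) (c i) x₀) with hs
    have hx₀c : x₀ ∈ cell a c s := fun i => sOk_of_ne (hx₀ i)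
    have hsub : cell a c s ⊆ U :=
      region_absorb hU (isOpen_cell a c s) (cellaff a c s) ⟨x₀, hx₀U, hx₀c⟩
    obtain ⟨A, β, hAβ⟩ := hU.2.2.1
    have hagree : A = AMat (1 : Matrix (Fin n) (Fin n) ℝ) a s ∧ β = bVec 1 0 c s := by
      apply affine_agree (hU.1.inter (isOpen_cell a c s)) (Set.mem_inter hx₀U hx₀c)
      intro x hx
      rw [← hAβ x hx.1, ite_vec_eq]
      exact funext fun i => max_eq_ite_of_sOk (hx.2 i)
    have hfa : ∀ x ∈ U, ∀ i, max 0 (ev (a i) (c i) x) = if s i then ev (a i) (c i) x else 0 := by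
      intro x hx i
      have h1 := hAβ x hx
      rw [hagree.1, hagree.2, ite_vec_eq] at h1
      exact congrFun h1 i
    have hsup : U ⊆ cell a c s := fun y hy => mem_cell_of_affine_eq hnz s hU.1 hfa hy
    exact ⟨s, ⟨x₀, hx₀c⟩, Set.Subset.antisymm hsub hsup⟩
  · rintro ⟨s, hs, rfl⟩
    obtain ⟨x₀, hx₀⟩ := hs
    refine ⟨isOpen_cell a c s, (convex_cell a c s).isConnected ⟨x₀, hx₀⟩, cellaff a c s, ?_⟩
    rintro Vs hVsopen hss ⟨A, β, hAβ⟩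
    have hagree : A = AMat (1 : Matrix (Fin n) (Fin n) ℝ) a s ∧ β = bVec 1 0 c s := by
      apply affine_agree (isOpen_cell a c s) hx₀
      intro x hx
      rw [← hAβ x (hss.subset hx), ite_vec_eq]
      exact funext fun i => max_eq_ite_of_sOk (hx i)
    have hfa : ∀ x ∈ Vs, ∀ i, max 0 (ev (a i) (c i) x) = if s i then ev (a i) (c i) x else 0 := by
      intro x hx i
      have h1 := hAβ x hx
      rw [hagree.1, hagree.2, ite_vec_eq] at h1
      exact congrFun h1 i
    obtain ⟨y, hyV, hyc⟩ := Set.exists_of_ssubset hss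
    exact hyc (mem_cell_of_affine_eq hnz s hVsopen hfa hyV)

lemma cell_injOn (a : Fin n → Fin d → ℝ) (c : Fin n → ℝ) :
    Set.InjOn (fun s => cell a c s) (Realized a c) := by
  intro s hs t _ hst
  obtain ⟨x, hx⟩ := hs
  have hxt : x ∈ cell a c t := (show cell a c s = cell a c t from hst) ▸ hx
  funext i
  have h1 := hx i
  have h2 := hxt i
  cases hsi : s i <;> cases hti : t i <;> rw [hsi] at h1 <;> rw [hti] at h2 <;>
    simp only [sOk, if_true, if_false, Bool.false_eq_true, ite_true, ite_false] at h1 h2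
  all_goals first
    | rfl
    | exact (lt_asymm h1 h2).elim
    | exact (lt_asymm h2 h1).elim

lemma regionSet_ncard {a : Fin n → Fin d → ℝ} {c : Fin n → ℝ} (hnz : ∀ i, a i ≠ 0) :
    {U | IsLinearRegionVec (fun x (i : Fin n) => max 0 (ev (a i) (c i) x)) U}.ncard
      = (Realized a c).ncard := by
  rw [regionSet_eq hnz, Set.ncard_image_of_injOn (cell_injOn a c)]

end ShallowRect

namespace ShallowRect

open Polynomial

lemma prod_sign {α : Type*} [DecidableEq α] (T : Finset α) (f : α → ℝ)
    (hf : ∀ p ∈ T, f p ≠ 0) :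
    (∏ p ∈ T, f p) ≠ 0 ∧
      (0 < ∏ p ∈ T, f p ↔ Even (T.filter (fun p => f p < 0)).card) := by
  classical
  induction T using Finset.induction_on with
  | empty => simp
  | @insert p T' hnm ih =>
      obtain ⟨h1, h2⟩ := ih (fun q hq => hf q (Finset.mem_insert_of_mem hq))
      rw [Finset.prod_insert hnm, Finset.filter_insert]
      have hp := hf p (Finset.mem_insert_self p T')
      refine ⟨mul_ne_zero hp h1, ?_⟩
      rcases lt_or_gt_of_ne hp with hneg | hpos
      · rw [if_pos hneg, Finset.card_insert_of_notMem (fun hmem => hnm (Finset.mem_of_mem_filter p hmem))]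
        have hstep : 0 < f p * ∏ p ∈ T', f p ↔ (∏ p ∈ T', f p) < 0 := by
          rw [mul_pos_iff]
          constructor
          · rintro (⟨h, _⟩ | ⟨_, h⟩)
            · linarith
            · exact h
          · intro h; exact Or.inr ⟨hneg, h⟩
        rw [hstep, Nat.even_add_one, ← h2]
        constructor
        · intro h hpos'; linarith
        · intro h
          rcases lt_or_gt_of_ne h1 with h' | h'
          · exact h'
          · exact absurd h' h
      · rw [if_neg (not_lt.2 hpos.le)]
        have hstep : 0 < f p * ∏ p ∈ T', f p ↔ 0 < ∏ p ∈ T', f p := by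
          rw [mul_pos_iff]
          constructor
          · rintro (⟨_, h⟩ | ⟨h, _⟩)
            · exact h
            · linarith
          · intro h; exact Or.inl ⟨hpos, h⟩
        rw [hstep, h2]

lemma card_filter_card_le (N D : ℕ) :
    ((Finset.univ : Finset (Finset (Fin N))).filter (fun S => S.card ≤ D)).card
      = ∑ k ∈ Finset.range (D + 1), N.choose k := by
  classical
  have hdecomp : ((Finset.univ : Finset (Finset (Fin N))).filter (fun S => S.card ≤ D))
      = (Finset.range (D + 1)).biUnion (fun k => Finset.powersetCard k Finset.univ) := by
    ext S
    simp only [Finset.mem_filter, Finset.mem_univ, true_and, Finset.mem_biUnion,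
      Finset.mem_range, Finset.mem_powersetCard, Nat.lt_succ_iff]
    constructor
    · intro h; exact ⟨S.card, h, Finset.subset_univ S, rfl⟩
    · rintro ⟨k, hk, _, rfl⟩; exact hk
  rw [hdecomp, Finset.card_biUnion]
  · refine Finset.sum_congr rfl fun k _ => ?_
    rw [Finset.card_powersetCard, Finset.card_univ, Fintype.card_fin]
  · intro k _ l _ hkl
    rw [Function.onFun, Finset.disjoint_left]
    intro S hS hS'
    rw [Finset.mem_powersetCard] at hS hS'
    exact hkl (hS.2 ▸ hS'.2.symm ▸ rfl)

lemma ev_coeff_eval {d : ℕ} (q : Polynomial ℝ) (hd : q.natDegree = d) (hm : q.Monic) (t : ℝ) :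
    ev (fun k : Fin d => t ^ (k : ℕ)) (t ^ d) (fun k => q.coeff k) = q.eval t := by
  rw [Polynomial.eval_eq_sum_range, hd, Finset.sum_range_succ]
  have hc : q.coeff d = 1 := by
    have := hm.coeff_natDegree
    rwa [hd] at this
  rw [hc, one_mul, ev]
  congr 1
  rw [← Fin.sum_univ_eq_sum_range (fun k => q.coeff k * t ^ k) d]
  exact Finset.sum_congr rfl fun k _ => mul_comm _ _

end ShallowRect

namespace ShallowRect

open Polynomial

lemma sOk_decide_pos {P : Prop} [Decidable P] {v : ℝ} (h : P ↔ 0 < v) (hnz : v ≠ 0) :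
    sOk (decide P) v := by
  by_cases hp : P
  · rw [decide_eq_true hp]
    simp only [sOk, if_true, ite_true]
    exact h.1 hp
  · rw [decide_eq_false hp]
    simp only [sOk, Bool.false_eq_true, if_false, ite_false]
    rcases lt_or_gt_of_ne hnz with h' | h'
    · exact h'
    · exact absurd (h.2 h') hp

lemma realize_pair (n' d'' : ℕ) (S : Finset (Fin n')) (mb : Bool)
    (hcard : S.card + (cond mb 1 0) ≤ d'' + 1) :
    (fun i : Fin (n' + 1) =>
        decide (Even ((S.filter (fun p : Fin n' => (i : ℕ) ≤ (p : ℕ))).card + (cond mb 1 0))))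
      ∈ Realized (fun (i : Fin (n' + 1)) (k : Fin (d'' + 1)) => ((i : ℕ) : ℝ) ^ (k : ℕ))
          (fun i => ((i : ℕ) : ℝ) ^ (d'' + 1)) := by
  classical
  set mv := (cond mb 1 0 : ℕ) with hmv
  set q : Polynomial ℝ :=
    (∏ p ∈ S, (X - C (((p : ℕ) : ℝ) + 1 / 2))) * ((X - C (((n' + 1 : ℕ)) : ℝ)) ^ mv) *
      ((X + C 1) ^ (d'' + 1 - S.card - mv)) with hq
  have hm1 : (∏ p ∈ S, (X - C (((p : ℕ) : ℝ) + 1 / 2))).Monic :=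
    monic_prod_of_monic _ _ fun p _ => monic_X_sub_C _
  have hm2 : ((X - C (((n' + 1 : ℕ)) : ℝ)) ^ mv).Monic := (monic_X_sub_C _).pow _
  have hm3 : ((X + C (1 : ℝ)) ^ (d'' + 1 - S.card - mv)).Monic := (monic_X_add_C _).pow _
  have hmonic : q.Monic := (hm1.mul hm2).mul hm3
  have hdeg : q.natDegree = d'' + 1 := by
    rw [hq, Monic.natDegree_mul (hm1.mul hm2) hm3, Monic.natDegree_mul hm1 hm2,
      natDegree_prod_of_monic _ _ fun p _ => monic_X_sub_C _]
    simp only [natDegree_X_sub_C, natDegree_pow, natDegree_X_add_C, Finset.sum_const,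
      smul_eq_mul, mul_one]
    omega
  refine ⟨fun k => q.coeff k, fun i => ?_⟩
  have hev : ev (fun k : Fin (d'' + 1) => ((i : ℕ) : ℝ) ^ (k : ℕ)) (((i : ℕ) : ℝ) ^ (d'' + 1))
      (fun k => q.coeff k) = q.eval ((i : ℕ) : ℝ) := ev_coeff_eval q hdeg hmonic _
  show sOk _ (ev _ _ _)
  rw [hev]
  set t : ℝ := ((i : ℕ) : ℝ) with ht
  have ht0 : (0 : ℝ) ≤ t := Nat.cast_nonneg _
  have heval : q.eval t = (∏ p ∈ S, (t - (((p : ℕ) : ℝ) + 1 / 2))) *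
      (t - (((n' + 1 : ℕ)) : ℝ)) ^ mv * (t + 1) ^ (d'' + 1 - S.card - mv) := by
    simp [hq, eval_mul, eval_prod, eval_pow, eval_sub, eval_add, eval_X, eval_C]
  have hPC : (0 : ℝ) < (t + 1) ^ (d'' + 1 - S.card - mv) := pow_pos (by linarith) _
  have hfnz : ∀ p ∈ S, t - (((p : ℕ) : ℝ) + 1 / 2) ≠ 0 := by
    intro p _
    rcases le_or_gt (i : ℕ) (p : ℕ) with h | h
    · have : t ≤ ((p : ℕ) : ℝ) := by rw [ht]; exact_mod_cast h
      intro hzero; linarith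
    · have : ((p : ℕ) : ℝ) + 1 ≤ t := by
        rw [ht]
        have : (p : ℕ) + 1 ≤ (i : ℕ) := h
        exact_mod_cast this
      intro hzero; linarith
  have hfilter : S.filter (fun p : Fin n' => t - (((p : ℕ) : ℝ) + 1 / 2) < 0)
      = S.filter (fun p : Fin n' => (i : ℕ) ≤ (p : ℕ)) := by
    apply Finset.filter_congr
    intro p _
    constructor
    · intro h
      by_contra hc
      push_neg at hc
      have : ((p : ℕ) : ℝ) + 1 ≤ t := by
        rw [ht]; exact_mod_cast hc
      linarith
    · intro h
      have : t ≤ ((p : ℕ) : ℝ) := by rw [ht]; exact_mod_cast h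
      linarith
  obtain ⟨hPAnz, hPAiff⟩ := prod_sign S (fun p => t - (((p : ℕ) : ℝ) + 1 / 2)) hfnz
  rw [hfilter] at hPAiff
  set cnt := (S.filter (fun p : Fin n' => (i : ℕ) ≤ (p : ℕ))).card with hcnt
  have hN : t - (((n' + 1 : ℕ)) : ℝ) < 0 := by
    have : (i : ℕ) < n' + 1 := i.isLt
    have h2 : t < ((n' + 1 : ℕ) : ℝ) := by rw [ht]; exact_mod_cast this
    linarith
  have hPAneg_iff : (∏ p ∈ S, (t - (((p : ℕ) : ℝ) + 1 / 2))) < 0 ↔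
      ¬Even ((S.filter (fun p : Fin n' => (i : ℕ) ≤ (p : ℕ))).card) := by
    constructor
    · intro h he
      have := hPAiff.2 he
      linarith
    · intro he
      rcases lt_or_gt_of_ne hPAnz with h' | h'
      · exact h'
      · exact absurd (hPAiff.1 h') he
  cases mb
  · rw [heval]
    show sOk (decide (Even ((S.filter (fun p : Fin n' => (i : ℕ) ≤ (p : ℕ))).card + 0)))
      ((∏ p ∈ S, (t - (((p : ℕ) : ℝ) + 1 / 2))) * (t - (((n' + 1 : ℕ)) : ℝ)) ^ (0 : ℕ) *
        (t + 1) ^ (d'' + 1 - S.card - (0 : ℕ)))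
    rw [pow_zero, mul_one]
    apply sOk_decide_pos
    · rw [Nat.add_zero, ← hPAiff]
      constructor
      · intro h
        exact mul_pos h hPC
      · intro h
        by_contra hno
        push_neg at hno
        have hPC' : (0:ℝ) < (t + 1) ^ (d'' + 1 - S.card - 0) := hPC
        nlinarith [mul_nonneg (neg_nonneg.2 hno) hPC'.le]
    · exact mul_ne_zero hPAnz (ne_of_gt hPC)
  · rw [heval]
    show sOk (decide (Even ((S.filter (fun p : Fin n' => (i : ℕ) ≤ (p : ℕ))).card + 1)))
      ((∏ p ∈ S, (t - (((p : ℕ) : ℝ) + 1 / 2))) * (t - (((n' + 1 : ℕ)) : ℝ)) ^ (1 : ℕ) *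
        (t + 1) ^ (d'' + 1 - S.card - (1 : ℕ)))
    rw [pow_one]
    apply sOk_decide_pos
    · rw [Nat.even_add_one, ← hPAneg_iff]
      constructor
      · intro h
        exact mul_pos (mul_pos_of_neg_of_neg h hN) hPC
      · intro h
        by_contra hno
        push_neg at hno
        have hPC' : (0:ℝ) < (t + 1) ^ (d'' + 1 - S.card - 1) := hPC
        rcases lt_or_eq_of_le hno with h3 | h3
        · nlinarith [mul_neg_of_neg_of_pos (mul_neg_of_pos_of_neg h3 hN) hPC']
        · rw [← h3] at h
          simp at h
    · exact mul_ne_zero (mul_ne_zero hPAnz (ne_of_lt hN)) (ne_of_gt hPC)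

end ShallowRect

namespace ShallowRect

lemma cnt_step {n' : ℕ} (S : Finset (Fin n')) (p : Fin n') :
    (S.filter (fun q : Fin n' => ((p.castSucc : Fin (n'+1)) : ℕ) ≤ (q : ℕ))).card
      = (S.filter (fun q : Fin n' => ((p.succ : Fin (n'+1)) : ℕ) ≤ (q : ℕ))).card
        + (if p ∈ S then 1 else 0) := by
  classical
  have h1 : S.filter (fun q : Fin n' => ((p.castSucc : Fin (n'+1)) : ℕ) ≤ (q : ℕ))
      = S.filter (fun q : Fin n' => ((p.succ : Fin (n'+1)) : ℕ) ≤ (q : ℕ) ∨ q = p) := by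
    apply Finset.filter_congr
    intro q _
    simp only [Fin.coe_castSucc, Fin.val_succ]
    constructor
    · intro h
      rcases eq_or_ne q p with rfl | hne
      · exact Or.inr rfl
      · left
        have : (p : ℕ) ≠ (q : ℕ) := fun hc => hne (Fin.ext hc.symm)
        omega
    · rintro (h | rfl)
      · omega
      · omega
  rw [h1, Finset.filter_or, Finset.card_union_of_disjoint, Finset.filter_eq' S p]
  · congr 1
    split
    · exact Finset.card_singleton p
    · exact Finset.card_empty
  · rw [Finset.disjoint_left]
    intro q hq1 hq2
    rw [Finset.mem_filter] at hq1 hq2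
    rw [hq2.2] at hq1
    simp only [Fin.val_succ] at hq1
    omega

lemma cnt_last {n' : ℕ} (S : Finset (Fin n')) :
    (S.filter (fun q : Fin n' => ((Fin.last n' : Fin (n'+1)) : ℕ) ≤ (q : ℕ))).card = 0 := by
  rw [Finset.card_eq_zero]
  apply Finset.filter_false_of_mem
  intro q _
  simp only [Fin.val_last]
  omega

lemma realized_lower (n' d'' : ℕ) :
    M (d'' + 1) (n' + 1) ≤
      (Realized (fun (i : Fin (n' + 1)) (k : Fin (d'' + 1)) => ((i : ℕ) : ℝ) ^ (k : ℕ))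
        (fun i => ((i : ℕ) : ℝ) ^ (d'' + 1))).ncard := by
  classical
  set A := (Finset.univ : Finset (Finset (Fin n'))).filter (fun S => S.card ≤ d'' + 1) with hA
  set B := (Finset.univ : Finset (Finset (Fin n'))).filter (fun S => S.card ≤ d'') with hB
  set Dom := A.image (fun S => (S, false)) ∪ B.image (fun S => (S, true)) with hDom
  set Φ : Finset (Fin n') × Bool → (Fin (n' + 1) → Bool) := fun Sm =>
    fun i => decide (Even ((Sm.1.filter (fun p : Fin n' => (i : ℕ) ≤ (p : ℕ))).card
      + (cond Sm.2 1 0))) with hΦ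
  have hinjf : Function.Injective (fun S : Finset (Fin n') => (S, false)) := by
    intro x y h; simpa using h
  have hinjt : Function.Injective (fun S : Finset (Fin n') => (S, true)) := by
    intro x y h; simpa using h
  have hDomcard : Dom.card = M (d'' + 1) (n' + 1) := by
    rw [hDom, Finset.card_union_of_disjoint, Finset.card_image_of_injective _ hinjf,
      Finset.card_image_of_injective _ hinjt]
    · rw [hA, hB, card_filter_card_le, card_filter_card_le, M_pascal]
      rfl
    · rw [Finset.disjoint_left]
      rintro ⟨S, mb⟩ h1 h2
      simp only [Finset.mem_image] at h1 h2
      obtain ⟨_, _, he1⟩ := h1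
      obtain ⟨_, _, he2⟩ := h2
      rw [← he2] at he1
      simpa using he1
  have hmem : ∀ Sm ∈ (Dom : Set (Finset (Fin n') × Bool)), Φ Sm ∈
      Realized (fun (i : Fin (n' + 1)) (k : Fin (d'' + 1)) => ((i : ℕ) : ℝ) ^ (k : ℕ))
        (fun i => ((i : ℕ) : ℝ) ^ (d'' + 1)) := by
    rintro ⟨S, mb⟩ hSm
    have hcard : S.card + (cond mb 1 0) ≤ d'' + 1 := by
      rw [Finset.mem_coe, hDom, Finset.mem_union] at hSm
      rcases hSm with h | h <;> simp only [Finset.mem_image] at h <;>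
        obtain ⟨S', hS', he⟩ := h
      · obtain ⟨rfl, rfl⟩ : S' = S ∧ false = mb := by
          constructor <;> [exact congrArg Prod.fst he; exact congrArg Prod.snd he]
        rw [hA, Finset.mem_filter] at hS'
        simpa using hS'.2
      · obtain ⟨rfl, rfl⟩ : S' = S ∧ true = mb := by
          constructor <;> [exact congrArg Prod.fst he; exact congrArg Prod.snd he]
        rw [hB, Finset.mem_filter] at hS'
        have := hS'.2
        simp only [cond]
        omega
    exact realize_pair n' d'' S mb hcard
  have hinj : Set.InjOn Φ (Dom : Set (Finset (Fin n') × Bool)) := by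
    rintro ⟨S, mb⟩ _ ⟨S', mb'⟩ _ heq
    have hlast := congrFun heq (Fin.last n')
    simp only [hΦ] at hlast
    rw [decide_eq_decide] at hlast
    rw [cnt_last S, cnt_last S'] at hlast
    have hmb : mb = mb' := by
      cases mb <;> cases mb' <;> simp_all
    subst hmb
    have hSS : S = S' := by
      ext p
      have h1 := congrFun heq p.castSucc
      have h2 := congrFun heq p.succ
      simp only [hΦ] at h1 h2
      rw [decide_eq_decide] at h1 h2
      rw [Nat.even_iff, Nat.even_iff] at h1 h2
      have e1 := cnt_step S p
      have e2 := cnt_step S' p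
      by_cases hp : p ∈ S <;> by_cases hp' : p ∈ S' <;>
        simp only [hp, hp', if_true, if_false, ite_true, ite_false] at e1 e2
      · simp [hp, hp']
      · exfalso; omega
      · exfalso; omega
      · simp [hp, hp']
    rw [hSS]
  calc M (d'' + 1) (n' + 1) = Dom.card := hDomcard.symm
    _ = (Dom : Set (Finset (Fin n') × Bool)).ncard := (Set.ncard_coe_finset Dom).symm
    _ ≤ _ := Set.ncard_le_ncard_of_injOn Φ hmem hinj (Set.toFinite _)

end ShallowRect

namespace ShallowRect

lemma regionSet_of_global {d k : ℕ} (f : (Fin d → ℝ) → Fin k → ℝ)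
    (h : ∃ (A : Matrix (Fin k) (Fin d) ℝ) (b : Fin k → ℝ), ∀ x, f x = A.mulVec x + b) :
    {U : Set (Fin d → ℝ) | IsLinearRegionVec f U} = {Set.univ} := by
  obtain ⟨A, b, hAb⟩ := h
  ext U
  simp only [Set.mem_setOf_eq, Set.mem_singleton_iff]
  constructor
  · intro hU
    by_contra hne
    have hss : U ⊂ Set.univ := Set.ssubset_univ_iff.2 hne
    exact hU.2.2.2 Set.univ isOpen_univ hss ⟨A, b, fun x _ => hAb x⟩
  · rintro rfl
    refine ⟨isOpen_univ, isConnected_univ, ⟨A, b, fun x _ => hAb x⟩, ?_⟩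
    intro V _ hss _
    exact hss.ne (Set.univ_subset_iff.1 hss.subset).symm

end ShallowRect

/-- The maximal number of regions of linearity of functions computed by a rectifier
network with `n₀` inputs, one hidden layer of `n₁` rectifier units, and linear output
units equals `∑_{j=0}^{n₀} binomial(n₁, j)`. -/
theorem shallow_rectifier_max_regions (n₀ n₁ : ℕ) :
    IsGreatest
      {N : ℕ | ∃ (m : ℕ) (W : Matrix (Fin n₁) (Fin n₀) ℝ) (b : Fin n₁ → ℝ)
          (V : Matrix (Fin m) (Fin n₁) ℝ) (c : Fin m → ℝ),
        N = {U : Set (Fin n₀ → ℝ) |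
              IsLinearRegionVec (fun x => V.mulVec (rect (W.mulVec x + b)) + c) U}.ncard}
      (∑ j ∈ Finset.range (n₀ + 1), n₁.choose j) := by
  have hM : (∑ j ∈ Finset.range (n₀ + 1), n₁.choose j) = ShallowRect.M n₀ n₁ := rfl
  constructor
  · -- the value is attained
    show ∃ _, _
    cases n₀ with
    | zero =>
        refine ⟨0, 0, 0, 0, 0, ?_⟩
        rw [ShallowRect.regionSet_of_global _ ⟨0, 0, fun x => Subsingleton.elim _ _⟩,
          Set.ncard_singleton, Finset.sum_range_one, Nat.choose_zero_right]
    | succ d'' =>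
        cases n₁ with
        | zero =>
            refine ⟨0, 0, 0, 0, 0, ?_⟩
            rw [ShallowRect.regionSet_of_global _ ⟨0, 0, fun x => Subsingleton.elim _ _⟩,
              Set.ncard_singleton, hM, ShallowRect.M_zero_right]
        | succ n' =>
            set acon : Fin (n' + 1) → Fin (d'' + 1) → ℝ :=
              fun i k => ((i : ℕ) : ℝ) ^ (k : ℕ) with hacon
            set ccon : Fin (n' + 1) → ℝ := fun i => ((i : ℕ) : ℝ) ^ (d'' + 1) with hccon
            refine ⟨n' + 1, Matrix.of acon, ccon, 1, 0, ?_⟩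
            have hfeq : (fun x => (1 : Matrix (Fin (n'+1)) (Fin (n'+1)) ℝ).mulVec
                (rect ((Matrix.of acon).mulVec x + ccon)) + (0 : Fin (n'+1) → ℝ))
                = fun x (i : Fin (n'+1)) =>
                    max 0 (ShallowRect.ev (acon i) (ccon i) x) := by
              funext x i
              simp only [Pi.add_apply, Pi.zero_apply, add_zero, Matrix.one_mulVec, rect,
                Matrix.mulVec, dotProduct, Matrix.of_apply, ShallowRect.ev]
            rw [hfeq]
            have hnz : ∀ i, acon i ≠ 0 := by
              intro i hzero
              have := congrFun hzero 0
              simp only [hacon, Pi.zero_apply] at this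
              rw [show ((0 : Fin (d'' + 1)) : ℕ) = 0 from rfl, pow_zero] at this
              exact one_ne_zero this
            rw [ShallowRect.regionSet_ncard hnz, hM]
            exact le_antisymm (ShallowRect.realized_lower n' d'')
              (ShallowRect.realized_card_le (n' + 1) (d'' + 1) acon ccon)
  · rintro N ⟨m, W, b, V, c, rfl⟩
    rw [hM]
    exact ShallowRect.regions_card_le n₀ n₁ m W b V c
end
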